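/- arXiv:2204.03780 — 4 statements merged into one kernel-verified Lean document; each statement's English description precedes it below -/
import Mathlib

section
/- Suppose in addition that for every pair of distinct indices j ≠ k in {1,2,3,4} the gradients ∇φ_j(x) and ∇φ_k(x) are linearly independent at every x ∈ B. Then for each permutation (i,j,k,l) of (1,2,3,4) there exists a constant C < ∞ such that for all f₁,f₂,f₃,f₄ with f_i, f_j ∈ L¹(ℝ) and f_k, f_l ∈ L∞(ℝ), the integral defining T converges absolutely and |T(f₁,f₂,f₃,f₄)| ≤ C · ‖f_i‖_{L¹} · ‖f_j‖_{L¹} · ‖f_k‖_{L∞} · ‖f_l‖_{L∞}. -/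
open MeasureTheory Real Set Filter Metric
open scoped FourierTransform ENNReal NNReal Topology ComplexConjugate

noncomputable section

abbrev Vec2 : Type := ℝ × ℝ

/-- The quadrilinear form `T(f) = ∫ ∏ⱼ fⱼ(φⱼ(x)) η(x) dx`. -/
def Tform (φ : Fin 4 → Vec2 → ℝ) (η : Vec2 → ℝ) (f : Fin 4 → ℝ → ℂ) : ℂ :=
  ∫ x : Vec2, (∏ j : Fin 4, f j (φ j x)) * (η x : ℂ)

lemma clm_eq_comb (f : Vec2 →L[ℝ] ℝ) :
    f = f (1,0) • ContinuousLinearMap.fst ℝ ℝ ℝ + f (0,1) • ContinuousLinearMap.snd ℝ ℝ ℝ := by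
  refine ContinuousLinearMap.ext fun x => ?_
  obtain ⟨a, b⟩ := x
  have h : (a, b) = a • ((1:ℝ),(0:ℝ)) + b • ((0:ℝ),(1:ℝ)) := by
    simp [Prod.ext_iff]
  have h2 : f (a, b) = a * f (1, 0) + b * f (0, 1) := by
    rw [h, map_add, _root_.map_smul, _root_.map_smul]; rfl
  simpa [mul_comm] using h2

lemma clm_ext2 {f g : Vec2 →L[ℝ] ℝ} (h1 : f (1,0) = g (1,0)) (h2 : f (0,1) = g (0,1)) :
    f = g := by
  rw [clm_eq_comb f, clm_eq_comb g, h1, h2]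

lemma det_prod_formula (f g : Vec2 →L[ℝ] ℝ) :
    (f.prod g).det = f (1,0) * g (0,1) - f (0,1) * g (1,0) := by
  have h : f.prod g = LinearMap.toContinuousLinearMap (Matrix.toLin (Module.Basis.finTwoProd ℝ)
      (Module.Basis.finTwoProd ℝ) !![f (1,0), f (0,1); g (1,0), g (0,1)]) := by
    rw [Matrix.toLin_finTwoProd_toContinuousLinearMap]
    congr 1
    · exact clm_eq_comb f
    · exact clm_eq_comb g
  rw [h]
  simp [LinearMap.det_toContinuousLinearMap, LinearMap.det_toLin, Matrix.det_fin_two_of]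

lemma det_ne_zero_of_indep {f g : Vec2 →L[ℝ] ℝ}
    (h : LinearIndependent ℝ ![f, g]) : (f.prod g).det ≠ 0 := by
  rw [det_prod_formula]
  rw [linearIndependent_fin2] at h
  simp only [Matrix.cons_val_one, Matrix.head_cons, Matrix.cons_val_zero] at h
  obtain ⟨hg, hfg⟩ := h
  intro hdet
  have hg' : g (1,0) ≠ 0 ∨ g (0,1) ≠ 0 := by
    by_contra h'
    push_neg at h'
    exact hg (by rw [clm_eq_comb g, h'.1, h'.2]; simp)
  rcases hg' with h1 | h1
  · refine hfg (f (1,0) / g (1,0)) (clm_ext2 ?_ ?_) <;>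
      simp only [ContinuousLinearMap.coe_smul', Pi.smul_apply, smul_eq_mul] <;>
      field_simp <;> linarith [hdet]
  · refine hfg (f (0,1) / g (0,1)) (clm_ext2 ?_ ?_) <;>
      simp only [ContinuousLinearMap.coe_smul', Pi.smul_apply, smul_eq_mul] <;>
      field_simp <;> linarith [hdet]


lemma local_chart {Φ : Vec2 → Vec2} {Φ' : Vec2 → (Vec2 →L[ℝ] Vec2)} {x : Vec2}
    (hx : HasStrictFDerivAt Φ (Φ' x) x) (hdet : (Φ' x).det ≠ 0)
    (hcont : ContinuousAt (fun y => (Φ' y).det) x)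
    (hder : ∀ᶠ y in 𝓝 x, HasFDerivAt Φ (Φ' y) y) :
    ∃ U : Set Vec2, IsOpen U ∧ x ∈ U ∧ ∃ C : ℝ≥0∞, C ≠ ⊤ ∧ ∀ g : Vec2 → ℝ≥0∞,
      (∫⁻ y in U, g (Φ y)) ≤ C * ∫⁻ y, g y := by
  set E := (Φ' x).toContinuousLinearEquivOfDetNeZero hdet with hE
  have hxE : HasStrictFDerivAt Φ (E : Vec2 →L[ℝ] Vec2) x := by
    rwa [hE, ContinuousLinearMap.coe_toContinuousLinearEquivOfDetNeZero]
  set P := hxE.toOpenPartialHomeomorph Φ with hP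
  have hsource : P.source ∈ 𝓝 x := P.open_source.mem_nhds hxE.mem_toOpenPartialHomeomorph_source
  set ε : ℝ := |(Φ' x).det| / 2 with hε
  have hε0 : 0 < ε := by positivity
  have hdets : ∀ᶠ y in 𝓝 x, ε < |(Φ' y).det| := by
    have : ContinuousAt (fun y => |(Φ' y).det|) x := hcont.abs
    have hlt : ε < |(Φ' x).det| := by
      simpa [hε] using half_lt_self (abs_pos.2 hdet)
    exact this.eventually (eventually_gt_nhds hlt)
  obtain ⟨U, hUsub, hUopen, hxU⟩ := _root_.mem_nhds_iff.1 (inter_mem (inter_mem hsource hdets) hder)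
  refine ⟨U, hUopen, hxU, (ENNReal.ofReal ε)⁻¹, ?_, fun g => ?_⟩
  · simp [ENNReal.inv_ne_top, ENNReal.ofReal_pos.2 hε0, ne_of_gt]
  · have hinj : InjOn Φ U := P.injOn.mono fun y hy => (hUsub hy).1.1
    have hfd : ∀ y ∈ U, HasFDerivWithinAt Φ (Φ' y) U y := fun y hy =>
      ((hUsub hy).2).hasFDerivWithinAt
    have hcv := lintegral_image_eq_lintegral_abs_det_fderiv_mul volume hUopen.measurableSet hfd hinj g
    have hlow : ENNReal.ofReal ε * ∫⁻ y in U, g (Φ y) ≤ ∫⁻ y in Φ '' U, g y := by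
      rw [hcv, ← lintegral_const_mul' _ _ ENNReal.ofReal_ne_top]
      refine lintegral_mono_ae ((ae_restrict_iff' hUopen.measurableSet).2 (ae_of_all _ ?_))
      intro y hy
      exact mul_le_mul_left (ENNReal.ofReal_le_ofReal ((hUsub hy).1.2).le) _
    calc (∫⁻ y in U, g (Φ y))
        = (ENNReal.ofReal ε)⁻¹ * (ENNReal.ofReal ε * ∫⁻ y in U, g (Φ y)) := by
          rw [← mul_assoc, ENNReal.inv_mul_cancel (by simp [ENNReal.ofReal_pos.2 hε0, ne_of_gt])
            ENNReal.ofReal_ne_top, one_mul]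
      _ ≤ (ENNReal.ofReal ε)⁻¹ * ∫⁻ y in Φ '' U, g y := mul_le_mul_right hlow _
      _ ≤ (ENNReal.ofReal ε)⁻¹ * ∫⁻ y, g y := mul_le_mul_right (setLIntegral_le_lintegral _ _) _


lemma key_compact {K U0 : Set Vec2} (hK : IsCompact K) (hU0 : IsOpen U0) (hKU : K ⊆ U0)
    {Φ : Vec2 → Vec2} {Φ' : Vec2 → (Vec2 →L[ℝ] Vec2)}
    (hder : ∀ x ∈ U0, HasStrictFDerivAt Φ (Φ' x) x)
    (hcont : ContinuousOn (fun y => (Φ' y).det) U0)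
    (hdet : ∀ x ∈ U0, (Φ' x).det ≠ 0) :
    ∃ C : ℝ≥0∞, C ≠ ⊤ ∧ ∀ g : Vec2 → ℝ≥0∞, (∫⁻ y in K, g (Φ y)) ≤ C * ∫⁻ y, g y := by
  have hloc : ∀ x ∈ K, ∃ U : Set Vec2, IsOpen U ∧ x ∈ U ∧ ∃ C : ℝ≥0∞, C ≠ ⊤ ∧
      ∀ g : Vec2 → ℝ≥0∞, (∫⁻ y in U, g (Φ y)) ≤ C * ∫⁻ y, g y := by
    intro x hx
    refine local_chart (hder x (hKU hx)) (hdet x (hKU hx))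
      (hcont.continuousAt (hU0.mem_nhds (hKU hx))) ?_
    filter_upwards [hU0.mem_nhds (hKU hx)] with y hy using (hder y hy).hasFDerivAt
  choose! U hUopen hxU C hCtop hCbound using hloc
  obtain ⟨t, htK, htcover⟩ := hK.elim_nhds_subcover U (fun x hx => (hUopen x hx).mem_nhds (hxU x hx))
  refine ⟨∑ x ∈ t, C x, by simp only [ENNReal.sum_ne_top]; intro x hx; exact hCtop x (htK x hx), ?_⟩
  intro g
  calc (∫⁻ y in K, g (Φ y)) ≤ ∫⁻ y in ⋃ x ∈ t, U x, g (Φ y) :=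
        lintegral_mono_set htcover
    _ = ∫⁻ y in ⋃ x : t, U x, g (Φ y) := by
        rw [show (⋃ x ∈ t, U x) = ⋃ x : t, U ↑x from by ext y; simp]
    _ ≤ ∑' x : t, ∫⁻ y in U x, g (Φ y) := lintegral_iUnion_le _ _
    _ = ∑ x ∈ t, ∫⁻ y in U x, g (Φ y) :=
        t.tsum_subtype fun x => ∫⁻ y in U x, g (Φ y)
    _ ≤ ∑ x ∈ t, C x * ∫⁻ y, g y := Finset.sum_le_sum fun x hx => hCbound x (htK x hx) g
    _ = (∑ x ∈ t, C x) * ∫⁻ y, g y := by rw [Finset.sum_mul]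


/-- with transversality, `T` is bounded by `L¹ × L¹ × L∞ × L∞`
for each permutation of the indices, with absolute convergence of the integral. -/
theorem stmt0
    -- `B` is a nonempty open ball of finite radius, `Bt` a connected open neighborhood of its closure
    (c₀ : Vec2) (r₀ : ℝ) (hr₀ : 0 < r₀)
    (B Bt : Set Vec2) (hB : B = Metric.ball c₀ r₀)
    (hBt_open : IsOpen Bt) (hBt_conn : IsConnected Bt) (hBBt : closure B ⊆ Bt)
    -- the φⱼ are real analytic submersions on `Bt`
    (φ : Fin 4 → Vec2 → ℝ)
    (hφ_an : ∀ j, AnalyticOnNhd ℝ (φ j) Bt)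
    (hφ_sub : ∀ j, ∀ x ∈ Bt, fderiv ℝ (φ j) x ≠ 0)
    -- η is a smooth cutoff supported in B
    (η : Vec2 → ℝ) (hη_smooth : ContDiff ℝ (⊤ : ℕ∞) η) (hη_supp : tsupport η ⊆ B)
    -- transversality hypothesis
    (htrans : ∀ x ∈ B, ∀ j k : Fin 4, j ≠ k →
      LinearIndependent ℝ ![fderiv ℝ (φ j) x, fderiv ℝ (φ k) x])
    : ∀ e : Equiv.Perm (Fin 4), ∃ C : ℝ, ∀ f : Fin 4 → ℝ → ℂ,
      MemLp (f (e 0)) 1 volume → MemLp (f (e 1)) 1 volume →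
      MemLp (f (e 2)) ⊤ volume → MemLp (f (e 3)) ⊤ volume →
      Integrable (fun x : Vec2 => (∏ j : Fin 4, f j (φ j x)) * (η x : ℂ)) volume ∧
      ‖Tform φ η f‖ ≤ C * (eLpNorm (f (e 0)) 1 volume).toReal
        * (eLpNorm (f (e 1)) 1 volume).toReal
        * (eLpNorm (f (e 2)) ⊤ volume).toReal
        * (eLpNorm (f (e 3)) ⊤ volume).toReal := by
  classical
  intro e
  have hBsub : B ⊆ Bt := subset_closure.trans hBBt
  set K := tsupport η with hKdef
  have hKcl : IsClosed K := isClosed_tsupport η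
  have hKB : K ⊆ B := hη_supp
  have hKBt : K ⊆ Bt := hKB.trans hBsub
  have hKmeas : MeasurableSet K := hKcl.measurableSet
  have hK : IsCompact K := Metric.isCompact_of_isClosed_isBounded hKcl
    ((Metric.isBounded_ball (x := c₀) (r := r₀)).subset (hB ▸ hKB))
  have hφc : ∀ a : Fin 4, ContinuousOn (φ a) Bt := fun a => (hφ_an a).continuousOn
  -- measurable modification of φ
  set ψ : Fin 4 → Vec2 → ℝ := fun a => Bt.piecewise (φ a) 0 with hψdef
  have hψmeas : ∀ a, Measurable (ψ a) := fun a =>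
    ContinuousOn.measurable_piecewise (hφc a) continuousOn_const hBt_open.measurableSet
  have hψeq : ∀ (a : Fin 4), ∀ x ∈ Bt, ψ a x = φ a x := fun a x hx =>
    Set.piecewise_eq_of_mem _ _ _ hx
  have hstrict : ∀ (a : Fin 4), ∀ x ∈ Bt, HasStrictFDerivAt (φ a) (fderiv ℝ (φ a) x) x :=
    fun a x hx => ((hφ_an a) x hx).hasStrictFDerivAt
  have hfdc : ∀ a : Fin 4, ContinuousOn (fun x => fderiv ℝ (φ a) x) Bt := fun a =>
    ((hφ_an a).fderiv).continuousOn
  -- the key estimate for each transversal pair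
  have pairkey : ∀ a b : Fin 4, a ≠ b → ∃ C : ℝ≥0∞, C ≠ ⊤ ∧ ∀ g : Vec2 → ℝ≥0∞,
      (∫⁻ x in K, g (φ a x, φ b x)) ≤ C * ∫⁻ p, g p := by
    intro a b hab
    have hder : ∀ x ∈ B, HasStrictFDerivAt (fun x => (φ a x, φ b x))
        ((fderiv ℝ (φ a) x).prod (fderiv ℝ (φ b) x)) x := fun x hx =>
      (hstrict a x (hBsub hx)).prodMk (hstrict b x (hBsub hx))
    have hcont : ContinuousOn
        (fun x => ((fderiv ℝ (φ a) x).prod (fderiv ℝ (φ b) x)).det) B := by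
      refine ContinuousOn.congr (f := fun x => fderiv ℝ (φ a) x (1,0) * fderiv ℝ (φ b) x (0,1)
          - fderiv ℝ (φ a) x (0,1) * fderiv ℝ (φ b) x (1,0)) ?_
        (fun x _ => det_prod_formula _ _)
      have h1 := (((hfdc a).mono hBsub).clm_apply (continuousOn_const (c := ((1:ℝ),(0:ℝ)))))
      have h2 := (((hfdc b).mono hBsub).clm_apply (continuousOn_const (c := ((0:ℝ),(1:ℝ)))))
      have h3 := (((hfdc a).mono hBsub).clm_apply (continuousOn_const (c := ((0:ℝ),(1:ℝ)))))
      have h4 := (((hfdc b).mono hBsub).clm_apply (continuousOn_const (c := ((1:ℝ),(0:ℝ)))))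
      exact (h1.mul h2).sub (h3.mul h4)
    exact key_compact hK (hB ▸ Metric.isOpen_ball) hKB hder hcont
      (fun x hx => det_ne_zero_of_indep (htrans x hx a b hab))
  -- null sets pull back to null sets
  have nullpre : ∀ (a : Fin 4) (Z : Set ℝ), MeasurableSet Z → volume Z = 0 →
      ∀ᵐ x : Vec2, x ∈ K → φ a x ∉ Z := by
    intro a Z hZm hZ0
    set b : Fin 4 := if a = 0 then 1 else 0 with hb
    have hab : a ≠ b := by
      rcases eq_or_ne a 0 with h | h <;> simp [hb, h]
    obtain ⟨C, hCtop, hCb⟩ := pairkey a b hab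
    have h1 : (∫⁻ x in K, (Z ×ˢ (univ : Set ℝ)).indicator 1 (φ a x, φ b x)) = 0 := by
      refine le_antisymm ((hCb _).trans ?_) zero_le
      rw [lintegral_indicator_one (hZm.prod MeasurableSet.univ)]
      rw [Measure.volume_eq_prod ℝ ℝ, Measure.prod_prod, hZ0, zero_mul, mul_zero]
    have h2 : (∫⁻ x in K, (ψ a ⁻¹' Z).indicator (1 : Vec2 → ℝ≥0∞) x) = 0 := by
      rw [← h1]
      refine lintegral_congr_ae ((ae_restrict_iff' hKmeas).2 (ae_of_all _ fun x hx => ?_))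
      by_cases h : φ a x ∈ Z <;>
        simp [Set.indicator_apply, Set.mem_prod, Set.mem_preimage, hψeq a x (hKBt hx), h]
    rw [lintegral_indicator_one ((hψmeas a) hZm)] at h2
    have h4 : ∀ᵐ x ∂(volume.restrict K), ψ a x ∉ Z := by
      rw [ae_iff]
      simp only [not_not]; exact h2
    filter_upwards [(ae_restrict_iff' hKmeas).1 h4] with x hx hxK hc
    exact hx hxK (by rwa [hψeq a x (hKBt hxK)])
  -- bound for the cutoff
  obtain ⟨cη, hcη⟩ := hη_smooth.continuous.bounded_above_of_compact_support hK
  obtain ⟨C01, hC01top, hC01⟩ := pairkey (e 0) (e 1) (e.injective.ne (by decide))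
  refine ⟨(ENNReal.ofReal cη * C01).toReal, ?_⟩
  intro f hf0 hf1 hf2 hf3
  have hmf : ∀ a : Fin 4, AEStronglyMeasurable (f a) volume := by
    intro a
    obtain ⟨b, rfl⟩ : ∃ b, e b = a := ⟨e.symm a, e.apply_symm_apply a⟩
    fin_cases b
    · exact hf0.1
    · exact hf1.1
    · exact hf2.1
    · exact hf3.1
  set g : Fin 4 → ℝ → ℂ := fun a => (hmf a).mk (f a) with hgdef
  have hgsm : ∀ a, StronglyMeasurable (g a) := fun a => (hmf a).stronglyMeasurable_mk
  have hfg : ∀ a, f a =ᵐ[volume] g a := fun a => (hmf a).ae_eq_mk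
  have hZex : ∀ a : Fin 4, ∃ Z : Set ℝ, MeasurableSet Z ∧ volume Z = 0 ∧
      ∀ t, t ∉ Z → f a t = g a t ∧ (‖f a t‖₊ : ℝ≥0∞) ≤ eLpNormEssSup (f a) volume := by
    intro a
    have hae : ∀ᵐ t : ℝ, f a t = g a t ∧ (‖f a t‖₊ : ℝ≥0∞) ≤ eLpNormEssSup (f a) volume :=
      (hfg a).and ae_le_eLpNormEssSup
    obtain ⟨Z, hsub, hZm, hZ0⟩ := exists_measurable_superset_of_null (ae_iff.1 hae)
    exact ⟨Z, hZm, hZ0, fun t ht => not_not.1 fun hc => ht (hsub hc)⟩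
  choose Z hZm hZ0 hZprop using hZex
  have hgood : ∀ᵐ x : Vec2, x ∈ K → ∀ a : Fin 4, φ a x ∉ Z a := by
    have h := fun a => nullpre a (Z a) (hZm a) (hZ0 a)
    filter_upwards [h 0, h 1, h 2, h 3] with x h0 h1 h2 h3 hxK a
    fin_cases a
    · exact h0 hxK
    · exact h1 hxK
    · exact h2 hxK
    · exact h3 hxK
  set F : Vec2 → ℂ := fun x => (∏ a : Fin 4, f a (φ a x)) * (η x : ℂ) with hFdef
  set G : Vec2 → ℂ := fun x => (∏ a : Fin 4, g a (ψ a x)) * (η x : ℂ) with hGdef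
  have hFG : F =ᵐ[volume] G := by
    filter_upwards [hgood] with x hx
    by_cases hxK : x ∈ K
    · have heq : ∀ a : Fin 4, f a (φ a x) = g a (ψ a x) := fun a => by
        rw [hψeq a x (hKBt hxK)]
        exact (hZprop a _ (hx hxK a)).1
      simp only [hFdef, hGdef]
      rw [Finset.prod_congr rfl fun a _ => heq a]
    · have hη0 : η x = 0 := image_eq_zero_of_notMem_tsupport hxK
      simp only [hFdef, hGdef, hη0, Complex.ofReal_zero, mul_zero]
  have hGm : AEStronglyMeasurable G volume := by
    apply AEStronglyMeasurable.mul
    · exact (Finset.stronglyMeasurable_prod Finset.univ fun a _ =>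
        (hgsm a).comp_measurable (hψmeas a)).aestronglyMeasurable
    · exact (Complex.continuous_ofReal.comp hη_smooth.continuous).aestronglyMeasurable
  set M2 := eLpNormEssSup (f (e 2)) volume with hM2def
  set M3 := eLpNormEssSup (f (e 3)) volume with hM3def
  have hM2top : M2 ≠ ⊤ := by rw [hM2def, ← eLpNorm_exponent_top]; exact hf2.2.ne
  have hM3top : M3 ≠ ⊤ := by rw [hM3def, ← eLpNorm_exponent_top]; exact hf3.2.ne
  set W : Vec2 → ℝ≥0∞ :=
    fun x => (‖g (e 0) (ψ (e 0) x)‖₊ : ℝ≥0∞) * (‖g (e 1) (ψ (e 1) x)‖₊ : ℝ≥0∞) with hWdef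
  have hpt : ∀ᵐ x : Vec2, x ∈ K → (‖F x‖₊ : ℝ≥0∞) ≤ (ENNReal.ofReal cη * M2 * M3) * W x := by
    filter_upwards [hgood] with x hx hxK
    set P : Fin 4 → ℝ≥0∞ := fun a => (‖f a (φ a x)‖₊ : ℝ≥0∞) with hPdef
    have hstep1 : (‖F x‖₊ : ℝ≥0∞) = (∏ a : Fin 4, P a) * (‖η x‖₊ : ℝ≥0∞) := by
      simp [hFdef, hPdef, nnnorm_mul, nnnorm_prod, ENNReal.coe_mul, ENNReal.coe_finset_prod]
    have hstep2 : ∏ a : Fin 4, P a = P (e 0) * P (e 1) * P (e 2) * P (e 3) := by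
      rw [← Equiv.prod_comp e P, Fin.prod_univ_four]
    have hb2 : P (e 2) ≤ M2 := (hZprop _ _ (hx hxK _)).2
    have hb3 : P (e 3) ≤ M3 := (hZprop _ _ (hx hxK _)).2
    have hbη : (‖η x‖₊ : ℝ≥0∞) ≤ ENNReal.ofReal cη := by
      rw [← enorm_eq_nnnorm, ← ofReal_norm]
      exact ENNReal.ofReal_le_ofReal (hcη x)
    have heq0 : P (e 0) = (‖g (e 0) (ψ (e 0) x)‖₊ : ℝ≥0∞) := by
      have h' : f (e 0) (φ (e 0) x) = g (e 0) (ψ (e 0) x) := by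
        rw [hψeq _ x (hKBt hxK)]; exact (hZprop _ _ (hx hxK _)).1
      simp only [hPdef, h']
    have heq1 : P (e 1) = (‖g (e 1) (ψ (e 1) x)‖₊ : ℝ≥0∞) := by
      have h' : f (e 1) (φ (e 1) x) = g (e 1) (ψ (e 1) x) := by
        rw [hψeq _ x (hKBt hxK)]; exact (hZprop _ _ (hx hxK _)).1
      simp only [hPdef, h']
    calc (‖F x‖₊ : ℝ≥0∞) = (‖η x‖₊ : ℝ≥0∞) * P (e 2) * P (e 3) * (P (e 0) * P (e 1)) := by
          rw [hstep1, hstep2]; ring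
      _ ≤ ENNReal.ofReal cη * M2 * M3 * (P (e 0) * P (e 1)) := by gcongr
      _ = (ENNReal.ofReal cη * M2 * M3) * W x := by rw [heq0, heq1]
  have hFK : ∀ x, x ∉ K → F x = 0 := fun x hx => by
    simp [hFdef, image_eq_zero_of_notMem_tsupport hx]
  have hlin : (∫⁻ x, (‖F x‖₊ : ℝ≥0∞)) = ∫⁻ x in K, (‖F x‖₊ : ℝ≥0∞) := by
    rw [← lintegral_indicator hKmeas]
    refine lintegral_congr fun x => ?_
    by_cases hx : x ∈ K
    · simp [hx]
    · simp [hx, hFK x hx]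
  have hN0 : (∫⁻ t, (‖g (e 0) t‖₊ : ℝ≥0∞)) = eLpNorm (f (e 0)) 1 volume := by
    simp_rw [← enorm_eq_nnnorm]; rw [← eLpNorm_one_eq_lintegral_enorm, ← eLpNorm_congr_ae (hfg (e 0))]
  have hN1 : (∫⁻ t, (‖g (e 1) t‖₊ : ℝ≥0∞)) = eLpNorm (f (e 1)) 1 volume := by
    simp_rw [← enorm_eq_nnnorm]; rw [← eLpNorm_one_eq_lintegral_enorm, ← eLpNorm_congr_ae (hfg (e 1))]
  set R := (ENNReal.ofReal cη * M2 * M3) *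
      (C01 * ((∫⁻ t, (‖g (e 0) t‖₊ : ℝ≥0∞))) * ((∫⁻ t, (‖g (e 1) t‖₊ : ℝ≥0∞)))) with hRdef
  have hWK : (∫⁻ x in K, W x) ≤
      C01 * (∫⁻ t, (‖g (e 0) t‖₊ : ℝ≥0∞)) * (∫⁻ t, (‖g (e 1) t‖₊ : ℝ≥0∞)) := by
    have h1 : (∫⁻ x in K, W x) = ∫⁻ x in K,
        (fun p : Vec2 => (‖g (e 0) p.1‖₊ : ℝ≥0∞) * (‖g (e 1) p.2‖₊ : ℝ≥0∞))
          (φ (e 0) x, φ (e 1) x) := by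
      refine lintegral_congr_ae ((ae_restrict_iff' hKmeas).2 (ae_of_all _ fun x hx => ?_))
      simp [hWdef, hψeq _ x (hKBt hx)]
    rw [h1]
    refine (hC01 (fun p : Vec2 => (‖g (e 0) p.1‖₊ : ℝ≥0∞) * (‖g (e 1) p.2‖₊ : ℝ≥0∞))).trans ?_
    have hprod : (∫⁻ p : Vec2, (‖g (e 0) p.1‖₊ : ℝ≥0∞) * (‖g (e 1) p.2‖₊ : ℝ≥0∞)) =
        (∫⁻ t, (‖g (e 0) t‖₊ : ℝ≥0∞)) * (∫⁻ t, (‖g (e 1) t‖₊ : ℝ≥0∞)) := by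
      rw [Measure.volume_eq_prod ℝ ℝ]
      exact lintegral_prod_mul ((hgsm (e 0)).measurable.nnnorm.coe_nnreal_ennreal.aemeasurable)
        ((hgsm (e 1)).measurable.nnnorm.coe_nnreal_ennreal.aemeasurable)
    rw [hprod, mul_assoc]
  have hFbound : (∫⁻ x, (‖F x‖₊ : ℝ≥0∞)) ≤ R := by
    rw [hlin]
    calc (∫⁻ x in K, (‖F x‖₊ : ℝ≥0∞))
        ≤ ∫⁻ x in K, (ENNReal.ofReal cη * M2 * M3) * W x :=
          lintegral_mono_ae ((ae_restrict_iff' hKmeas).2 hpt)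
      _ = (ENNReal.ofReal cη * M2 * M3) * ∫⁻ x in K, W x :=
          lintegral_const_mul' _ _ (by
            exact ENNReal.mul_ne_top (ENNReal.mul_ne_top ENNReal.ofReal_ne_top hM2top) hM3top)
      _ ≤ R := by rw [hRdef]; exact mul_le_mul_right hWK _
  have hRtop : R ≠ ⊤ := by
    rw [hRdef]
    refine ENNReal.mul_ne_top (ENNReal.mul_ne_top
      (ENNReal.mul_ne_top ENNReal.ofReal_ne_top hM2top) hM3top)
      (ENNReal.mul_ne_top (ENNReal.mul_ne_top hC01top ?_) ?_)
    · rw [hN0]; exact hf0.2.ne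
    · rw [hN1]; exact hf1.2.ne
  have hInt : Integrable F volume := by
    refine ⟨hGm.congr hFG.symm, ?_⟩
    exact lt_of_le_of_lt hFbound hRtop.lt_top
  refine ⟨hInt, ?_⟩
  have hnorm : ‖Tform φ η f‖ ≤ (∫⁻ x, (‖F x‖₊ : ℝ≥0∞)).toReal := by
    rw [Tform]
    refine (norm_integral_le_lintegral_norm _).trans ?_
    simp_rw [ofReal_norm, enorm_eq_nnnorm]
    exact le_refl _
  refine hnorm.trans ((ENNReal.toReal_mono hRtop hFbound).trans (le_of_eq ?_))
  rw [hRdef, ← hN0, ← hN1, hM2def, hM3def, ← eLpNorm_exponent_top, ← eLpNorm_exponent_top]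
  simp only [ENNReal.toReal_mul]
  ring
end
end

section
/- Suppose that for every pair of distinct indices j ≠ k in {1,2,3,4} the gradients ∇φ_j(x) and ∇φ_k(x) are linearly independent at every x ∈ B. Then there exists a constant C < ∞, depending only on the φ_j and B, such that for every λ ≥ 1 and every γ ∈ (1/2,1), the number of tuples m = (m₁,m₂,m₃,m₄) ∈ ℤ⁴ for which there exists x ∈ B with φ_j(x) ∈ I_{m_j}* for every j ∈ {1,2,3,4} is at most C λ^{2γ}, where I_m* denotes the interval of length 3λ^{-γ} centered at mλ^{-γ}. -/
open MeasureTheory Real Set Filter Metric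
open scoped FourierTransform ENNReal NNReal Topology ComplexConjugate

set_option maxHeartbeats 1000000

noncomputable section

/-- `I_m*`, the interval of length `3λ^{-γ}` centered at `mλ^{-γ}`. -/
def Istar (lam γ : ℝ) (m : ℤ) : Set ℝ :=
  Set.Icc ((m : ℝ) * lam ^ (-γ) - 3 / 2 * lam ^ (-γ)) ((m : ℝ) * lam ^ (-γ) + 3 / 2 * lam ^ (-γ))

/-- A tuple `m ∈ ℤ⁴` is interacting if some `x ∈ B` has `φⱼ(x) ∈ I*_{mⱼ}` for all `j`. -/
def Interacting (B : Set Vec2) (φ : Fin 4 → Vec2 → ℝ) (lam γ : ℝ) (m : Fin 4 → ℤ) : Prop :=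
  ∃ x ∈ B, ∀ j, φ j x ∈ Istar lam γ (m j)

/-- under transversality, there are at most `C λ^{2γ}` interacting tuples. -/
theorem stmt9
    -- `B` is a nonempty open ball of finite radius, `Bt` a connected open neighborhood of its closure
    (c₀ : Vec2) (r₀ : ℝ) (hr₀ : 0 < r₀)
    (B Bt : Set Vec2) (hB : B = Metric.ball c₀ r₀)
    (hBt_open : IsOpen Bt) (hBt_conn : IsConnected Bt) (hBBt : closure B ⊆ Bt)
    -- the φⱼ are real analytic submersions on `Bt`
    (φ : Fin 4 → Vec2 → ℝ)
    (hφ_an : ∀ j, AnalyticOnNhd ℝ (φ j) Bt)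
    (hφ_sub : ∀ j, ∀ x ∈ Bt, fderiv ℝ (φ j) x ≠ 0)
    -- transversality hypothesis
    (htrans : ∀ x ∈ B, ∀ j k : Fin 4, j ≠ k →
      LinearIndependent ℝ ![fderiv ℝ (φ j) x, fderiv ℝ (φ k) x])
    : ∃ C : ℝ, ∀ lam : ℝ, 1 ≤ lam → ∀ γ : ℝ, 1 / 2 < γ → γ < 1 →
      ∀ S : Set (Fin 4 → ℤ), S = {m : Fin 4 → ℤ | Interacting B φ lam γ m} →
      S.Finite ∧ (S.ncard : ℝ) ≤ C * lam ^ (2 * γ) := by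
  classical
  -- the closure of `B` is a convex compact subset of `Bt`
  have hBcl : closure B = Metric.closedBall c₀ r₀ := by
    rw [hB]; exact closure_ball c₀ hr₀.ne'
  have hBconv : Convex ℝ (closure B) := by rw [hBcl]; exact convex_closedBall c₀ r₀
  have hBcpt : IsCompact (closure B) := by rw [hBcl]; exact isCompact_closedBall c₀ r₀
  have hdiff : ∀ j : Fin 4, ∀ x ∈ closure B, DifferentiableAt ℝ (φ j) x :=
    fun j x hx => ((hφ_an j) x (hBBt hx)).differentiableAt
  -- a uniform bound on the derivatives on `closure B`
  have hMj : ∀ j : Fin 4, ∃ Mj : ℝ, ∀ x ∈ closure B, ‖fderiv ℝ (φ j) x‖ ≤ Mj := by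
    intro j
    exact hBcpt.exists_bound_of_continuousOn
      (((hφ_an j).fderiv.continuousOn).mono hBBt)
  choose Mf hMf using hMj
  set M : ℝ := max (max (Mf 0) (Mf 1)) (max (Mf 2) (Mf 3)) ⊔ 0 with hM_def
  have hM0 : 0 ≤ M := le_max_right _ _
  have hM : ∀ j : Fin 4, ∀ x ∈ closure B, ‖fderiv ℝ (φ j) x‖ ≤ M := by
    intro j x hx
    refine le_trans (hMf j x hx) (le_trans ?_ (le_max_left _ _))
    fin_cases j
    · exact le_trans (le_max_left _ _) (le_max_left _ _)
    · exact le_trans (le_max_right _ _) (le_max_left _ _)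
    · exact le_trans (le_max_left _ _) (le_max_right _ _)
    · exact le_trans (le_max_right _ _) (le_max_right _ _)
  -- `φ j` is `M`-Lipschitz on `closure B`
  have hLip : ∀ j : Fin 4, ∀ x ∈ closure B, ∀ y ∈ closure B,
      |φ j x - φ j y| ≤ M * ‖x - y‖ := by
    intro j x hx y hy
    have := hBconv.norm_image_sub_le_of_norm_fderiv_le (hdiff j) (hM j) hy hx
    simpa [Real.norm_eq_abs] using this
  set R : ℝ := ‖c₀‖ + r₀ with hR_def
  have hR0 : 0 < R := add_pos_of_nonneg_of_pos (norm_nonneg _) hr₀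
  set N : ℤ := ⌈(3 : ℝ) + M⌉ with hN_def
  have hN0 : 0 ≤ N := by positivity
  refine ⟨(2*R+5)^2 * (((2*N+1).toNat : ℝ))^4, ?_⟩
  intro lam hlam γ hγ1 hγ2 S hS
  have hlam0 : (0:ℝ) < lam := lt_of_lt_of_le one_pos hlam
  set δ : ℝ := lam ^ (-γ) with hδ_def
  have hδpos : 0 < δ := Real.rpow_pos_of_pos hlam0 _
  have hγ0 : (0:ℝ) ≤ γ := le_of_lt (lt_trans (by norm_num) hγ1)
  have hlamγ1 : (1:ℝ) ≤ lam ^ γ := by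
    calc (1:ℝ) = lam ^ (0:ℝ) := (Real.rpow_zero lam).symm
    _ ≤ lam ^ γ := Real.rpow_le_rpow_of_exponent_le hlam hγ0
  have hδinv : lam ^ γ * δ = 1 := by
    rw [hδ_def, ← Real.rpow_add hlam0]
    simp
  -- the grid cell of a point
  set cell : Vec2 → ℤ × ℤ := fun x => (⌊x.1 / δ⌋, ⌊x.2 / δ⌋) with hcell_def
  -- witnesses
  obtain ⟨w, hw⟩ : ∃ w : (Fin 4 → ℤ) → Vec2, ∀ m ∈ S,
      w m ∈ B ∧ ∀ j, φ j (w m) ∈ Istar lam γ (m j) := by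
    refine ⟨fun m => if h : Interacting B φ lam γ m then h.choose else c₀, ?_⟩
    intro m hm
    rw [hS] at hm
    simp only [Set.mem_setOf_eq] at hm
    simp only [dif_pos hm]
    exact ⟨hm.choose_spec.1, hm.choose_spec.2⟩
  -- a representative tuple for each occupied cell
  obtain ⟨μ, hμ⟩ : ∃ μ : ℤ × ℤ → (Fin 4 → ℤ), ∀ m ∈ S,
      μ (cell (w m)) ∈ S ∧ cell (w (μ (cell (w m)))) = cell (w m) := by
    refine ⟨fun c => if h : ∃ m ∈ S, cell (w m) = c then h.choose else 0, ?_⟩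
    intro m hm
    have h : ∃ m' ∈ S, cell (w m') = cell (w m) := ⟨m, hm, rfl⟩
    simp only [dif_pos h]
    exact ⟨h.choose_spec.1, h.choose_spec.2⟩
  -- points in the same cell are within `δ`
  have hclose : ∀ x y : Vec2, cell x = cell y → ‖x - y‖ ≤ δ := by
    intro x y hxy
    have key : ∀ a b : ℝ, ⌊a / δ⌋ = ⌊b / δ⌋ → |a - b| ≤ δ := by
      intro a b h
      have h1 : (⌊a/δ⌋ : ℝ) ≤ a/δ := Int.floor_le _
      have h2 : a/δ < ⌊a/δ⌋ + 1 := Int.lt_floor_add_one _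
      have h3 : (⌊b/δ⌋ : ℝ) ≤ b/δ := Int.floor_le _
      have h4 : b/δ < ⌊b/δ⌋ + 1 := Int.lt_floor_add_one _
      rw [h] at h1 h2
      have ha : a = (a/δ)*δ := (div_mul_cancel₀ a hδpos.ne').symm
      have hb : b = (b/δ)*δ := (div_mul_cancel₀ b hδpos.ne').symm
      rw [abs_le]
      constructor <;> nlinarith
    have e1 : ⌊x.1 / δ⌋ = ⌊y.1 / δ⌋ := congrArg Prod.fst hxy
    have e2 : ⌊x.2 / δ⌋ = ⌊y.2 / δ⌋ := congrArg Prod.snd hxy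
    rw [Prod.norm_def]
    refine max_le ?_ ?_
    · simpa [Real.norm_eq_abs] using key _ _ e1
    · simpa [Real.norm_eq_abs] using key _ _ e2
  -- tuples witnessed in the same cell are close componentwise
  have hA : ∀ m ∈ S, ∀ m' ∈ S, cell (w m) = cell (w m') →
      ∀ j : Fin 4, m j - m' j ∈ Finset.Icc (-N) N := by
    intro m hm m' hm' hc j
    obtain ⟨hmB, hmI⟩ := hw m hm
    obtain ⟨hmB', hmI'⟩ := hw m' hm'
    have hI1 := hmI j
    have hI2 := hmI' j
    simp only [Istar, Set.mem_Icc] at hI1 hI2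
    have hlip := hLip j (w m) (subset_closure hmB) (w m') (subset_closure hmB')
    have hdist : ‖w m - w m'‖ ≤ δ := hclose _ _ hc
    have hφd : |φ j (w m) - φ j (w m')| ≤ M * δ :=
      le_trans hlip (mul_le_mul_of_nonneg_left hdist hM0)
    have habs : |((m j : ℝ)) - ((m' j : ℝ))| * δ ≤ (3 + M) * δ := by
      have : |((m j : ℝ)) * δ - ((m' j : ℝ)) * δ| ≤ (3 + M) * δ := by
        rw [abs_le] at hφd ⊢
        constructor <;> nlinarith [hI1.1, hI1.2, hI2.1, hI2.2, hφd.1, hφd.2]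
      calc |((m j : ℝ)) - ((m' j : ℝ))| * δ = |((m j : ℝ)) * δ - ((m' j : ℝ)) * δ| := by
            rw [← sub_mul, abs_mul, abs_of_pos hδpos]
        _ ≤ (3 + M) * δ := this
    have habs2 : |((m j : ℝ)) - ((m' j : ℝ))| ≤ 3 + M :=
      le_of_mul_le_mul_right habs hδpos
    have hNle : |((m j : ℝ)) - ((m' j : ℝ))| ≤ (N : ℝ) :=
      le_trans habs2 (Int.le_ceil _)
    have : |m j - m' j| ≤ N := by exact_mod_cast (by push_cast; exact hNle :
      ((|m j - m' j| : ℤ) : ℝ) ≤ (N : ℝ))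
    rw [Finset.mem_Icc]
    exact abs_le.mp this
  -- occupied cells lie in a box of side `~ (R+1) λ^γ`
  set K : ℤ := ⌈(R + 1) * lam ^ γ⌉ with hK_def
  have hK1 : (R + 1) * lam ^ γ ≤ (K : ℝ) := Int.le_ceil _
  have hK0 : 0 ≤ K := by
    have : (0:ℝ) < (R+1) * lam ^ γ := by positivity
    exact le_of_lt (by exact_mod_cast Int.ceil_pos.mpr this)
  have hBbox : ∀ m ∈ S, cell (w m) ∈ Finset.Icc ((-K, -K) : ℤ × ℤ) (K, K) := by
    intro m hm
    obtain ⟨hmB, _⟩ := hw m hm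
    rw [hB, Metric.mem_ball] at hmB
    have hnorm : ‖w m - c₀‖ < r₀ := by rwa [dist_eq_norm] at hmB
    have hcoord : ∀ a : ℝ, |a| ≤ R → -K ≤ ⌊a / δ⌋ ∧ ⌊a / δ⌋ ≤ K := by
      intro a haR
      have hq : |a / δ| ≤ R * lam ^ γ := by
        rw [abs_div, abs_of_pos hδpos, div_le_iff₀ hδpos]
        calc |a| ≤ R := haR
          _ = R * 1 := (mul_one R).symm
          _ = R * (lam ^ γ * δ) := by rw [hδinv]
          _ = R * lam ^ γ * δ := by ring
      rw [abs_le] at hq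
      obtain ⟨hq1, hq2⟩ := hq
      have hring : (R + 1) * lam ^ γ = R * lam ^ γ + lam ^ γ := by ring
      constructor
      · have hfl : a / δ - 1 < (⌊a / δ⌋ : ℝ) := Int.sub_one_lt_floor _
        have : (-K : ℝ) ≤ (⌊a / δ⌋ : ℝ) := by
          calc (-K : ℝ) ≤ -((R + 1) * lam ^ γ) := by linarith
            _ = -(R * lam ^ γ) - lam ^ γ := by rw [hring]; ring
            _ ≤ a / δ - lam ^ γ := by linarith
            _ ≤ a / δ - 1 := by linarith
            _ ≤ (⌊a / δ⌋ : ℝ) := le_of_lt hfl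
        exact_mod_cast this
      · have hfl : (⌊a / δ⌋ : ℝ) ≤ a / δ := Int.floor_le _
        have : ((⌊a / δ⌋ : ℤ) : ℝ) ≤ (K : ℝ) := by
          calc ((⌊a / δ⌋ : ℤ) : ℝ) ≤ a / δ := hfl
            _ ≤ R * lam ^ γ := hq2
            _ ≤ (R + 1) * lam ^ γ := by rw [hring]; linarith
            _ ≤ (K : ℝ) := hK1
        exact_mod_cast this
    have h1 : |(w m).1| ≤ R := by
      have : |(w m).1 - c₀.1| ≤ ‖w m - c₀‖ := by
        simpa [Real.norm_eq_abs] using norm_fst_le (w m - c₀)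
      have hc1 : |c₀.1| ≤ ‖c₀‖ := by simpa [Real.norm_eq_abs] using norm_fst_le c₀
      calc |(w m).1| ≤ |(w m).1 - c₀.1| + |c₀.1| := by
            have := abs_sub_abs_le_abs_sub ((w m).1) (c₀.1); linarith [abs_nonneg c₀.1]
        _ ≤ ‖w m - c₀‖ + ‖c₀‖ := add_le_add this hc1
        _ ≤ R := by rw [hR_def]; linarith
    have h2 : |(w m).2| ≤ R := by
      have : |(w m).2 - c₀.2| ≤ ‖w m - c₀‖ := by
        simpa [Real.norm_eq_abs] using norm_snd_le (w m - c₀)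
      have hc2 : |c₀.2| ≤ ‖c₀‖ := by simpa [Real.norm_eq_abs] using norm_snd_le c₀
      calc |(w m).2| ≤ |(w m).2 - c₀.2| + |c₀.2| := by
            have := abs_sub_abs_le_abs_sub ((w m).2) (c₀.2); linarith [abs_nonneg c₀.2]
        _ ≤ ‖w m - c₀‖ + ‖c₀‖ := add_le_add this hc2
        _ ≤ R := by rw [hR_def]; linarith
    obtain ⟨l1, u1⟩ := hcoord _ h1
    obtain ⟨l2, u2⟩ := hcoord _ h2
    rw [Finset.mem_Icc]
    exact ⟨⟨l1, l2⟩, ⟨u1, u2⟩⟩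
  -- the injection
  set T : Finset ((ℤ × ℤ) × (Fin 4 → ℤ)) :=
    Finset.Icc ((-K, -K), fun _ => -N) ((K, K), fun _ => N) with hT_def
  set G : (Fin 4 → ℤ) → (ℤ × ℤ) × (Fin 4 → ℤ) :=
    fun m => (cell (w m), fun j => m j - μ (cell (w m)) j) with hG_def
  have hmaps : ∀ m ∈ S, G m ∈ (T : Set ((ℤ × ℤ) × (Fin 4 → ℤ))) := by
    intro m hm
    obtain ⟨hμS, hμc⟩ := hμ m hm
    have hoff := hA m hm _ hμS hμc.symm
    simp only [hT_def, hG_def, Finset.coe_Icc, Set.mem_Icc, Prod.le_def, Pi.le_def]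
    have hbox := hBbox m hm
    rw [Finset.mem_Icc, Prod.le_def, Prod.le_def] at hbox
    refine ⟨⟨hbox.1, fun j => ?_⟩, ⟨hbox.2, fun j => ?_⟩⟩
    · exact (Finset.mem_Icc.mp (hoff j)).1
    · exact (Finset.mem_Icc.mp (hoff j)).2
  have hinj : Set.InjOn G S := by
    intro m hm m' hm' hGe
    simp only [hG_def, Prod.mk.injEq] at hGe
    obtain ⟨hc, ho⟩ := hGe
    funext j
    have := congrFun ho j
    rw [hc] at this
    omega
  have hfin : S.Finite := by
    refine Set.Finite.of_finite_image ?_ hinj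
    exact Set.Finite.subset T.finite_toSet (by rintro _ ⟨m, hm, rfl⟩; exact hmaps m hm)
  refine ⟨hfin, ?_⟩
  have hcard : S.ncard ≤ T.card := by
    have := Set.ncard_le_ncard_of_injOn G hmaps hinj T.finite_toSet
    simpa [Set.ncard_coe_finset] using this
  -- compute the cardinality of T
  have hTcard : T.card = ((2*K+1).toNat)^2 * ((2*N+1).toNat)^4 := by
    rw [hT_def, Finset.card_Icc_prod]
    rw [Finset.card_Icc_prod]
    rw [Pi.card_Icc]
    simp only [Int.card_Icc]
    have e1 : (K + 1 - -K) = 2*K+1 := by ring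
    have e2 : (N + 1 - -N) = 2*N+1 := by ring
    rw [e1, e2]
    simp [sq, pow_succ]
  -- put everything together
  have hKR : ((2*K+1 : ℤ) : ℝ) ≤ (2*R+5) * lam ^ γ := by
    have hceil : (K : ℝ) < (R + 1) * lam ^ γ + 1 := Int.ceil_lt_add_one _
    have : (2:ℝ) * ((R+1) * lam ^ γ) + 3 ≤ (2*R+5) * lam ^ γ := by nlinarith
    push_cast
    linarith
  have hWnn : (0:ℝ) ≤ (((2*N+1).toNat : ℝ))^4 := by positivity
  have hKcast : (((2*K+1).toNat : ℕ) : ℝ) = ((2*K+1 : ℤ) : ℝ) := by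
    have h : ((2*K+1).toNat : ℤ) = 2*K+1 := Int.toNat_of_nonneg (by omega)
    exact_mod_cast h
  have hfinal : (S.ncard : ℝ) ≤ ((2*R+5) * lam ^ γ)^2 * (((2*N+1).toNat : ℝ))^4 := by
    have h1 : (S.ncard : ℝ) ≤ (T.card : ℝ) := by exact_mod_cast hcard
    have h2 : (T.card : ℝ) = (((2*K+1).toNat : ℝ))^2 * (((2*N+1).toNat : ℝ))^4 := by
      rw [hTcard]; push_cast; ring
    rw [h2] at h1
    refine le_trans h1 ?_
    refine mul_le_mul_of_nonneg_right ?_ hWnn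
    have hb : ((2*K+1).toNat : ℝ) ≤ (2*R+5) * lam ^ γ := by
      rw [hKcast]; exact hKR
    have hnn : (0:ℝ) ≤ ((2*K+1).toNat : ℝ) := by positivity
    exact pow_le_pow_left₀ hnn hb 2
  have hrpow : lam ^ (2*γ) = (lam ^ γ)^2 := by
    rw [mul_comm, Real.rpow_mul hlam0.le]
    rw [show ((2:ℝ) : ℝ) = ((2:ℕ) : ℝ) by norm_num, Real.rpow_natCast]
  calc (S.ncard : ℝ) ≤ ((2*R+5) * lam ^ γ)^2 * (((2*N+1).toNat : ℝ))^4 := hfinal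
    _ = (2*R+5)^2 * (((2*N+1).toNat : ℝ))^4 * (lam ^ γ)^2 := by ring
    _ = (2*R+5)^2 * (((2*N+1).toNat : ℝ))^4 * lam ^ (2*γ) := by rw [hrpow]
end
end

section
/- Assume the main hypothesis and the transversality hypothesis, with coordinates chosen so that φ₄(x₁,x₂) = x₁ on B. If F₁,F₂,F₃ are real analytic functions of one variable such that Σ_{j=1}^3 F_j(φ_j(x))·∇φ_j(x) ≡ 0 for all x in some nonempty open subset U of B, then each F_j vanishes identically on φ_j(U). Consequently, the functional equation admits no solution of the form f_j(y,t) = F_j(y) (independent of t, i.e. with homogeneity exponent σ = 0) other than the identically zero one. -/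
open MeasureTheory Real Set Filter Metric
open scoped FourierTransform ENNReal NNReal Topology ComplexConjugate

noncomputable section

open FormalMultilinearSeries in
/-- An antiderivative of a real-analytic function is real-analytic. -/
lemma analyticAt_of_hasDerivAt_analyticAt {g f : ℝ → ℝ} {y : ℝ}
    (hg : AnalyticAt ℝ g y) (hf : ∀ᶠ t in 𝓝 y, HasDerivAt f (g t) t) :
    AnalyticAt ℝ f y := by
  obtain ⟨p, r, hp⟩ := hg
  obtain ⟨ε, hε, hball⟩ := Metric.eventually_nhds_iff_ball.1 hf
  obtain ⟨ρ, hρ0, hρlt⟩ := ENNReal.lt_iff_exists_nnreal_btwn.1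
    (show (0:ℝ≥0∞) < min r (ENNReal.ofReal ε) from
      lt_min hp.r_pos (by simpa using hε))
  have hρ0' : (0:ℝ≥0) < ρ := by exact_mod_cast hρ0
  have hρ0r : (0:ℝ) < ρ := hρ0'
  have hρr : (ρ : ℝ≥0∞) < r := hρlt.trans_le (min_le_left _ _)
  have hρε : (ρ : ℝ) < ε := by
    have h2 := hρlt.trans_le (min_le_right _ _)
    rw [← ENNReal.ofReal_coe_nnreal] at h2
    exact (ENNReal.ofReal_lt_ofReal_iff hε).1 h2
  set a : ℕ → ℝ := fun n => p.coeff n with ha_def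
  set c : ℕ → ℝ := fun n => Nat.casesOn n 0 (fun m => a m / (m + 1)) with hc_def
  set q : FormalMultilinearSeries ℝ ℝ ℝ := ofScalars ℝ c with hq_def
  have hqnorm : ∀ n, ‖q n‖ = |c n| := fun n => ofScalars_norm ℝ c n
  have ha_le : ∀ n, |a n| ≤ ‖p n‖ := by
    intro n
    calc |a n| = ‖p n 1‖ := (Real.norm_eq_abs _).symm
      _ ≤ ‖p n‖ * ∏ i : Fin n, ‖(1 : Fin n → ℝ) i‖ := (p n).le_opNorm _
      _ = ‖p n‖ := by simp
  obtain ⟨C, hC0, hC⟩ := p.norm_mul_pow_le_of_lt_radius (hρr.trans_le hp.r_le)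
  have hq_rad : (ρ : ℝ≥0∞) ≤ q.radius := by
    apply q.le_radius_of_bound (max 0 (C * ρ))
    intro n
    match n with
    | 0 => simp [hqnorm 0, hc_def]
    | (m+1) =>
      have h1 : ‖q (m+1)‖ ≤ ‖p m‖ := by
        rw [hqnorm]
        have hcm : c (m+1) = a m / ((m:ℝ) + 1) := rfl
        have h2 : |c (m+1)| ≤ |a m| := by
          rw [hcm, abs_div, abs_of_nonneg (show (0:ℝ) ≤ (m:ℝ)+1 by positivity)]
          exact div_le_self (abs_nonneg _) (by linarith [Nat.cast_nonneg (α := ℝ) m])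
        exact h2.trans (ha_le m)
      calc ‖q (m+1)‖ * (ρ:ℝ)^(m+1) = (‖q (m+1)‖ * (ρ:ℝ)^m) * ρ := by ring
        _ ≤ (‖p m‖ * (ρ:ℝ)^m) * ρ := by
            apply mul_le_mul_of_nonneg_right _ ρ.coe_nonneg
            exact mul_le_mul_of_nonneg_right h1 (by positivity)
        _ ≤ C * ρ := mul_le_mul_of_nonneg_right (hC m) ρ.coe_nonneg
        _ ≤ max 0 (C * ρ) := le_max_right _ _
  have hq_pos : (0:ℝ≥0∞) < q.radius := hρ0.trans_le hq_rad
  have hq0 : HasFPowerSeriesOnBall q.sum q 0 ρ :=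
    (q.hasFPowerSeriesOnBall hq_pos).mono hρ0 hq_rad
  set h : ℝ → ℝ := fun t => q.sum (t - y) with hh_def
  have hq' : HasFPowerSeriesOnBall h q y ρ := by
    refine ⟨hq_rad, hρ0, fun {z} hz => ?_⟩
    have h3 := hq0.hasSum (y := z) (by simpa using hz)
    simpa [hh_def, add_sub_cancel_left] using h3
  -- the derivative of h is g away from y
  have hfd := hq'.fderiv
  have key : ∀ z : ℝ, (‖z‖₊ : ℝ≥0∞) < ρ → z ≠ 0 → deriv h (y + z) = g (y + z) := by
    intro z hz hz0
    have hz' : z ∈ Metric.eball (0:ℝ) ρ := by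
      simpa [Metric.mem_eball, edist_eq_enorm_sub, enorm_eq_nnnorm, ← NNReal.coe_lt_coe] using hz
    have S1 : HasSum (fun n => q.derivSeries n (fun _ => z) z) (fderiv ℝ h (y+z) z) := by
      have h4 := hfd.hasSum (y := z) hz'
      exact h4.mapL (ContinuousLinearMap.apply ℝ ℝ z)
    have hterm : ∀ n : ℕ, q.derivSeries n (fun _ => z) z = a n * z^n * z := by
      intro n
      rw [FormalMultilinearSeries.derivSeries_apply_diag]
      have h5 : q (n+1) (fun _ => z) = c (n+1) • z^(n+1) := ofScalars_apply_eq c z (n+1)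
      rw [h5]
      have hcn : c (n+1) = a n / ((n:ℝ) + 1) := rfl
      have hne : ((n:ℝ)+1) ≠ 0 := by positivity
      rw [hcn, smul_eq_mul, nsmul_eq_mul]
      push_cast
      field_simp
      ring
    rw [funext hterm] at S1
    have S2 : HasSum (fun n => a n * z^n * z) (g (y+z) * z) := by
      have h0 := hp.hasSum (y := z) (lt_trans (by simpa [Metric.mem_eball, edist_eq_enorm_sub, enorm_eq_nnnorm, ← NNReal.coe_lt_coe] using hz') hρr)
      have h6 : (fun n => p n fun _ => z) = fun n => a n * z^n := by
        funext n
        rw [show (p n fun _ => z) = z ^ n • p.coeff n from p.apply_eq_pow_smul_coeff]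
        simp [ha_def, mul_comm]
      rw [h6] at h0
      exact h0.mul_right z
    have h7 : fderiv ℝ h (y+z) z = g (y+z) * z := S1.unique S2
    have h8 : fderiv ℝ h (y+z) z = z * deriv h (y+z) := by
      have h8a : fderiv ℝ h (y+z) z = fderiv ℝ h (y+z) (z • (1:ℝ)) := by norm_num
      rw [h8a, (fderiv ℝ h (y+z)).map_smul]
      rfl
    rw [h8, mul_comm (g (y+z)) z] at h7
    exact mul_left_cancel₀ hz0 h7
  -- also at y, by continuity
  have hcd : ContinuousAt (deriv h) y := by
    have h9 : ContinuousAt (fderiv ℝ h) y := hfd.analyticAt.continuousAt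
    exact ((ContinuousLinearMap.apply ℝ ℝ (1:ℝ)).continuous.continuousAt).comp h9
  have hcg : ContinuousAt g y := hp.analyticAt.continuousAt
  have hev : deriv h =ᶠ[𝓝[≠] y] g := by
    have hball' : Metric.eball y (ρ:ℝ≥0∞) ∈ 𝓝 y := Metric.eball_mem_nhds _ hρ0
    filter_upwards [mem_nhdsWithin_of_mem_nhds hball', self_mem_nhdsWithin] with t ht htne
    have hz : (‖t - y‖₊ : ℝ≥0∞) < ρ := by
      rwa [Metric.mem_eball, edist_eq_enorm_sub, enorm_eq_nnnorm] at ht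
    have := key (t - y) hz (sub_ne_zero.2 htne)
    simpa [add_sub_cancel] using this
  have h_y : deriv h y = g y := by
    have t1 : Tendsto (deriv h) (𝓝[≠] y) (𝓝 (deriv h y)) := hcd.tendsto.mono_left nhdsWithin_le_nhds
    have t2 : Tendsto (deriv h) (𝓝[≠] y) (𝓝 (g y)) :=
      (hcg.tendsto.mono_left nhdsWithin_le_nhds).congr' hev.symm
    exact tendsto_nhds_unique t1 t2
  have hderiv_all : ∀ t ∈ Metric.eball y (ρ:ℝ≥0∞), deriv h t = g t := by
    intro t ht
    rcases eq_or_ne t y with rfl | hne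
    · exact h_y
    · have hz : (‖t - y‖₊ : ℝ≥0∞) < ρ := by
        rwa [Metric.mem_eball, edist_eq_enorm_sub, enorm_eq_nnnorm] at ht
      have := key (t - y) hz (sub_ne_zero.2 hne)
      simpa [add_sub_cancel] using this
  have hderiv : ∀ t ∈ Metric.ball y (ρ:ℝ), HasDerivAt h (g t) t := by
    intro t ht
    have htE : t ∈ Metric.eball y (ρ:ℝ≥0∞) := by
      rwa [← Metric.emetric_ball_nnreal] at ht
    have hdiff : DifferentiableAt ℝ h t :=
      (hq'.differentiableOn t htE).differentiableAt (EMetric.isOpen_ball.mem_nhds htE)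
    have := hdiff.hasDerivAt
    rwa [hderiv_all t htE] at this
  -- f - h has zero derivative on the ball, hence is constant
  have hsub : ∀ t ∈ Metric.ball y (ρ:ℝ), HasDerivAt (fun u => f u - h u) 0 t := by
    intro t ht
    have ht' : t ∈ Metric.ball y ε := Metric.ball_subset_ball hρε.le ht
    have := (hball t ht').sub (hderiv t ht)
    simpa [Pi.sub_def] using this
  have hfw : ∀ u ∈ Metric.ball y (ρ:ℝ),
      fderivWithin ℝ (fun u => f u - h u) (Metric.ball y (ρ:ℝ)) u = 0 := by
    intro u hu
    have h10 : HasFDerivWithinAt (fun u => f u - h u) (0 : ℝ →L[ℝ] ℝ) (Metric.ball y (ρ:ℝ)) u := by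
      have h11 := (hsub u hu).hasFDerivAt.hasFDerivWithinAt (s := Metric.ball y (ρ:ℝ))
      convert h11 using 1
      ext
      simp
      simp
    exact h10.fderivWithin (Metric.isOpen_ball.uniqueDiffWithinAt hu)
  have hconst : ∀ t ∈ Metric.ball y (ρ:ℝ), f t - h t = f y - h y := by
    intro t ht
    exact Convex.is_const_of_fderivWithin_eq_zero (𝕜 := ℝ) (convex_ball y (ρ:ℝ))
      (fun u hu => ((hsub u hu).differentiableAt).differentiableWithinAt) hfw ht
      (Metric.mem_ball_self hρ0r)
  have hfeq : f =ᶠ[𝓝 y] fun t => h t + (f y - h y) := by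
    filter_upwards [Metric.ball_mem_nhds y hρ0r] with t ht
    have := hconst t ht
    linarith
  exact ((hq'.analyticAt.add analyticAt_const).congr hfeq.symm)


/-- under the main hypothesis, the only solution of
`Σ Fⱼ(φⱼ(x))·∇φⱼ(x) ≡ 0` with real analytic Fⱼ is the zero solution
(no solutions with homogeneity exponent σ = 0). -/
theorem stmt13
    -- `B` is a nonempty open ball of finite radius, `Bt` a connected open neighborhood of its closure
    (c₀ : Vec2) (r₀ : ℝ) (hr₀ : 0 < r₀)
    (B Bt : Set Vec2) (hB : B = Metric.ball c₀ r₀)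
    (hBt_open : IsOpen Bt) (hBt_conn : IsConnected Bt) (hBBt : closure B ⊆ Bt)
    -- the φⱼ are real analytic submersions on `Bt`
    (φ : Fin 4 → Vec2 → ℝ)
    (hφ_an : ∀ j, AnalyticOnNhd ℝ (φ j) Bt)
    (hφ_sub : ∀ j, ∀ x ∈ Bt, fderiv ℝ (φ j) x ≠ 0)
    -- transversality hypothesis
    (htrans : ∀ x ∈ B, ∀ j k : Fin 4, j ≠ k →
      LinearIndependent ℝ ![fderiv ℝ (φ j) x, fderiv ℝ (φ k) x])
    -- main hypothesis
    (hmain : ∀ Ω : Set Vec2, Ω ⊆ B → IsOpen Ω → IsConnected Ω →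
      ∀ F : Fin 4 → ℝ → ℝ, (∀ j, AnalyticOnNhd ℝ (F j) (φ j '' Ω)) →
      (∀ x ∈ Ω, ∑ j : Fin 4, F j (φ j x) = 0) →
      ∀ j : Fin 4, ∀ y ∈ φ j '' Ω, ∀ y' ∈ φ j '' Ω, F j y = F j y')
    -- coordinates are chosen so that φ₄(x₁,x₂) = x₁ on B
    (hφ4 : ∀ x ∈ B, φ 3 x = x.1)
    (U : Set Vec2) (hU_open : IsOpen U) (hU_ne : U.Nonempty) (hUB : U ⊆ B)
    (F : Fin 3 → ℝ → ℝ)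
    (hF_an : ∀ j : Fin 3, AnalyticOnNhd ℝ (F j) (φ j.castSucc '' U))
    (heq : ∀ x ∈ U, ∑ j : Fin 3, F j (φ j.castSucc x) • fderiv ℝ (φ j.castSucc) x = 0) :
    ∀ j : Fin 3, ∀ y ∈ φ j.castSucc '' U, F j y = 0 := by
  intro j y hy
  obtain ⟨x₀, hx₀U, hx₀y⟩ := hy
  obtain ⟨ε, hε, hBallU⟩ := Metric.isOpen_iff.1 hU_open x₀ hx₀U
  set Ω : Set Vec2 := Metric.ball x₀ ε with hΩdef
  have hΩU : Ω ⊆ U := hBallU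
  have hΩB : Ω ⊆ B := hΩU.trans hUB
  have hΩBt : Ω ⊆ Bt := fun x hx => hBBt (subset_closure (hΩB hx))
  have hΩo : IsOpen Ω := Metric.isOpen_ball
  have hΩne : Ω.Nonempty := Metric.nonempty_ball.2 hε
  have hΩconn : IsConnected Ω := ⟨hΩne, (convex_ball x₀ ε).isPreconnected⟩
  have hx₀Ω : x₀ ∈ Ω := Metric.mem_ball_self hε
  -- the images `φ k '' Ω` are open
  have hmap : ∀ (k : Fin 4), ∀ x ∈ Ω, Filter.map (φ k) (𝓝 x) = 𝓝 (φ k x) := by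
    intro k x hx
    have hxBt : x ∈ Bt := hΩBt hx
    have hstrict := (hφ_an k x hxBt).hasStrictFDerivAt
    apply hstrict.map_nhds_eq_of_surj
    have hne := hφ_sub k x hxBt
    obtain ⟨v, hv⟩ : ∃ v, fderiv ℝ (φ k) x v ≠ 0 := by
      by_contra hcon
      push_neg at hcon
      exact hne (ContinuousLinearMap.ext fun v => by simp [hcon v])
    rw [LinearMap.range_eq_top]
    intro b
    refine ⟨(b / (fderiv ℝ (φ k) x v)) • v, ?_⟩
    have h13 : fderiv ℝ (φ k) x ((b / (fderiv ℝ (φ k) x v)) • v) = b := by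
      rw [(fderiv ℝ (φ k) x).map_smul, smul_eq_mul, div_mul_cancel₀ _ hv]
    simpa using h13
  have hSopen : ∀ k : Fin 4, IsOpen (φ k '' Ω) := by
    intro k
    rw [isOpen_iff_mem_nhds]
    rintro z ⟨x, hx, rfl⟩
    rw [← hmap k x hx]
    exact Filter.image_mem_map (hΩo.mem_nhds hx)
  have hφcont : ∀ k : Fin 4, ContinuousOn (φ k) Ω :=
    fun k x hx => (hφ_an k x (hΩBt hx)).continuousAt.continuousWithinAt
  have hSord : ∀ k : Fin 4, OrdConnected (φ k '' Ω) :=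
    fun k => (hΩconn.isPreconnected.image _ (hφcont k)).ordConnected
  have hSsubU : ∀ j' : Fin 3, φ j'.castSucc '' Ω ⊆ φ j'.castSucc '' U :=
    fun j' => image_mono hΩU
  have hScont : ∀ j' : Fin 3, ContinuousOn (F j') (φ j'.castSucc '' Ω) :=
    fun j' z hz => ((hF_an j') z (hSsubU j' hz)).continuousAt.continuousWithinAt
  -- antiderivatives of the `F j`
  set G : Fin 3 → ℝ → ℝ := fun j' t => ∫ s in (φ j'.castSucc x₀)..t, F j' s with hGdef
  have hmemS : ∀ j' : Fin 3, φ j'.castSucc x₀ ∈ φ j'.castSucc '' Ω :=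
    fun j' => mem_image_of_mem _ hx₀Ω
  have hG_deriv : ∀ j' : Fin 3, ∀ t ∈ φ j'.castSucc '' Ω, HasDerivAt (G j') (F j' t) t := by
    intro j' t ht
    have huIcc : Set.uIcc (φ j'.castSucc x₀) t ⊆ φ j'.castSucc '' Ω :=
      (hSord j'.castSucc).uIcc_subset (hmemS j') ht
    have hint : IntervalIntegrable (F j') volume (φ j'.castSucc x₀) t :=
      ((hScont j').mono huIcc).intervalIntegrable
    have hct : ContinuousAt (F j') t := ((hF_an j') t (hSsubU j' ht)).continuousAt
    exact intervalIntegral.integral_hasDerivAt_right hint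
      (ContinuousOn.stronglyMeasurableAtFilter (hSopen j'.castSucc) (hScont j') t ht) hct
  have hG_an : ∀ j' : Fin 3, AnalyticOnNhd ℝ (G j') (φ j'.castSucc '' Ω) := by
    intro j' z hz
    apply analyticAt_of_hasDerivAt_analyticAt ((hF_an j') z (hSsubU j' hz))
    filter_upwards [(hSopen j'.castSucc).mem_nhds hz] with t ht
    exact hG_deriv j' t ht
  -- `∑ⱼ Gⱼ ∘ φⱼ` has zero derivative on Ω, hence is constant there
  set ψ : Vec2 → ℝ := fun x => ∑ j' : Fin 3, G j' (φ j'.castSucc x) with hψdef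
  have hψd : ∀ x ∈ Ω, HasFDerivAt ψ
      (0 : Vec2 →L[ℝ] ℝ) x := by
    intro x hx
    have hsum : HasFDerivAt ψ
        (∑ j' : Fin 3, F j' (φ j'.castSucc x) • fderiv ℝ (φ j'.castSucc) x) x := by
      apply HasFDerivAt.fun_sum
      intro j' _
      have hφd : HasFDerivAt (φ j'.castSucc) (fderiv ℝ (φ j'.castSucc) x) x :=
        ((hφ_an j'.castSucc x (hΩBt hx)).differentiableAt).hasFDerivAt
      exact (hG_deriv j' _ (mem_image_of_mem _ hx)).comp_hasFDerivAt x hφd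
    rwa [heq x (hΩU hx)] at hsum
  have hψconst : ∀ x ∈ Ω, ψ x = ψ x₀ := by
    have hfw : ∀ u ∈ Ω, fderivWithin ℝ ψ Ω u = 0 :=
      fun u hu => ((hψd u hu).hasFDerivWithinAt).fderivWithin (hΩo.uniqueDiffWithinAt hu)
    intro x hx
    exact Convex.is_const_of_fderivWithin_eq_zero (𝕜 := ℝ) (f := ψ) (convex_ball x₀ ε)
      (fun u hu => (hψd u hu).differentiableAt.differentiableWithinAt) hfw hx hx₀Ω
  -- apply the main hypothesis with the antiderivatives and a constant
  set c4 : ℝ := ψ x₀ with hc4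
  set Fk : Fin 4 → ℝ → ℝ := Fin.lastCases (fun _ => -c4) (fun j' => G j') with hFkdef
  have hFk_cast : ∀ j' : Fin 3, Fk j'.castSucc = G j' := fun j' => by
    simp [hFkdef]
  have hFk_last : Fk (Fin.last 3) = fun _ => -c4 := by simp only [hFkdef, Fin.lastCases_last]
  have hFk_an : ∀ k : Fin 4, AnalyticOnNhd ℝ (Fk k) (φ k '' Ω) := by
    intro k
    induction k using Fin.lastCases with
    | last => rw [hFk_last]; exact fun z _ => analyticAt_const
    | cast j' => rw [hFk_cast]; exact hG_an j'
  have hFk_sum : ∀ x ∈ Ω, ∑ k : Fin 4, Fk k (φ k x) = 0 := by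
    intro x hx
    rw [Fin.sum_univ_castSucc]
    have hcastsum : ∑ i : Fin 3, Fk i.castSucc (φ i.castSucc x)
        = ∑ i : Fin 3, G i (φ i.castSucc x) :=
      Finset.sum_congr rfl (fun i _ => by rw [hFk_cast i])
    rw [hcastsum, hFk_last]
    have h14 := hψconst x hx
    rw [hψdef] at h14
    simp only [h14]
    simp [hc4]
  have hmainc := hmain Ω hΩB hΩo hΩconn Fk hFk_an hFk_sum j.castSucc
  have hyΩ : y ∈ φ j.castSucc '' Ω := ⟨x₀, hx₀Ω, hx₀y⟩
  have hGconst : ∀ t ∈ φ j.castSucc '' Ω, G j t = G j y := by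
    intro t ht
    have h12 := hmainc t ht y hyΩ
    rwa [hFk_cast j] at h12
  have hevconst : G j =ᶠ[𝓝 y] fun _ => G j y := by
    filter_upwards [(hSopen j.castSucc).mem_nhds hyΩ] with t ht
    exact hGconst t ht
  have h1 : HasDerivAt (fun _ : ℝ => G j y) (F j y) y :=
    (hG_deriv j y hyΩ).congr_of_eventuallyEq hevconst.symm
  exact h1.unique (hasDerivAt_const y (G j y))
end
end

section
/- For every σ ∈ ℝ∖{0,1} and every constant A ≥ 1 there exist κ > 0 and C < ∞ such that for every ε > 0, the Lebesgue measure of the set {(u,v,t) ∈ ℝ³ : u, v, u+t, v+t ∈ (0, A], |t| ≤ A, and |(u+t)^σ − u^σ − (v+t)^σ + v^σ| < ε} is at most C ε^κ. -/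
open MeasureTheory Real Set Filter Metric
open scoped ENNReal NNReal Topology

noncomputable section

set_option maxHeartbeats 1000000

lemma stmt18_slice {β : Type*} [MeasureSpace β] [SigmaFinite (volume : Measure β)]
    {S : Set (ℝ × β)} (hS : MeasurableSet S) {a : ℝ} {M : ℝ≥0∞}
    (h : ∀ x : ℝ, volume (Prod.mk x ⁻¹' S) ≤ (Set.Ioc (0:ℝ) a).indicator (fun _ => M) x) :
    volume S ≤ ENNReal.ofReal a * M := by
  rw [Measure.volume_eq_prod, Measure.prod_apply hS]
  calc ∫⁻ x, volume (Prod.mk x ⁻¹' S) ≤ ∫⁻ x, (Set.Ioc (0:ℝ) a).indicator (fun _ => M) x :=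
        lintegral_mono h
    _ = M * volume (Set.Ioc (0:ℝ) a) := lintegral_indicator_const measurableSet_Ioc M
    _ = ENNReal.ofReal a * M := by rw [Real.volume_Ioc, sub_zero, mul_comm]

lemma rpow_diff_lower {η A : ℝ} (σ1 : ℝ) (hσ1 : σ1 ≠ 0) (hη : 0 < η) {x y : ℝ}
    (hx : η ≤ x) (hxy : x < y) (hy : y ≤ A) :
    |σ1| * (η ^ (σ1 - 1) ⊓ A ^ (σ1 - 1)) * (y - x) ≤ |y ^ σ1 - x ^ σ1| := by
  obtain ⟨ζ, hζ, hslope⟩ := exists_hasDerivAt_eq_slope (fun s => s ^ σ1)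
      (fun s => σ1 * s ^ (σ1 - 1)) hxy
      (fun s hs => (Real.hasDerivAt_rpow_const
        (Or.inl (by rcases hs with ⟨h1, _⟩; nlinarith [hη.trans_le hx]))).continuousAt.continuousWithinAt)
      (fun s hs => Real.hasDerivAt_rpow_const
        (Or.inl (by rcases hs with ⟨h1, _⟩; nlinarith [hη.trans_le hx])))
  have hζ0 : (0:ℝ) < ζ := lt_of_lt_of_le (hη.trans_le hx) hζ.1.le
  have hyx : y ^ σ1 - x ^ σ1 = σ1 * ζ ^ (σ1 - 1) * (y - x) := by
    rw [hslope, div_mul_cancel₀ _ (sub_ne_zero.mpr hxy.ne')]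
  have hmin : η ^ (σ1 - 1) ⊓ A ^ (σ1 - 1) ≤ ζ ^ (σ1 - 1) := by
    rcases le_or_gt 0 (σ1 - 1) with hp | hp
    · exact (min_le_left _ _).trans (Real.rpow_le_rpow hη.le (hx.trans hζ.1.le) hp)
    · exact (min_le_right _ _).trans
        (Real.rpow_le_rpow_of_nonpos hζ0 (hζ.2.le.trans hy) hp.le)
  rw [hyx, abs_mul, abs_mul, abs_of_pos (sub_pos.mpr hxy)]
  have h2 : η ^ (σ1 - 1) ⊓ A ^ (σ1 - 1) ≤ |ζ ^ (σ1 - 1)| := by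
    rw [abs_of_pos (Real.rpow_pos_of_pos hζ0 _)]; exact hmin
  gcongr

lemma stmt18_core (σ : ℝ) (hσ0 : σ ≠ 0) (hσ1 : σ ≠ 1) {A η ε u v : ℝ} (hA : 1 ≤ A)
    (hη : 0 < η) (hε : 0 < ε) (huv : η < |u - v|) :
    volume {t : ℝ | (η < u + t ∧ u + t ≤ A) ∧ (η < v + t ∧ v + t ≤ A) ∧
        |(u + t) ^ σ - u ^ σ - (v + t) ^ σ + v ^ σ| < ε}
      ≤ ENNReal.ofReal (2 * ε / (|σ| * |σ - 1| * η * (η ^ (σ - 2) ⊓ A ^ (σ - 2)))) := by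
  have hA0 : (0:ℝ) < A := lt_of_lt_of_le one_pos hA
  have hs0 : (0:ℝ) < |σ| := abs_pos.mpr hσ0
  have hs1 : (0:ℝ) < |σ - 1| := abs_pos.mpr (sub_ne_zero.mpr hσ1)
  have hmin : (0:ℝ) < η ^ (σ - 2) ⊓ A ^ (σ - 2) :=
    lt_min (Real.rpow_pos_of_pos hη _) (Real.rpow_pos_of_pos hA0 _)
  set δ := |σ| * |σ - 1| * η * (η ^ (σ - 2) ⊓ A ^ (σ - 2)) with hδdef
  have hδ : 0 < δ := by positivity
  set φ : ℝ → ℝ := fun t => (u + t) ^ σ - u ^ σ - (v + t) ^ σ + v ^ σ with hφdef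
  set T := {t : ℝ | (η < u + t ∧ u + t ≤ A) ∧ (η < v + t ∧ v + t ≤ A) ∧ |φ t| < ε} with hTdef
  have key : ∀ t1 ∈ T, ∀ t2 ∈ T, t1 < t2 → t2 - t1 ≤ 2 * ε / δ := by
    intro t1 ht1 t2 ht2 hlt
    obtain ⟨⟨hu1, hu1A⟩, ⟨hv1, hv1A⟩, hf1⟩ := ht1
    obtain ⟨⟨hu2, hu2A⟩, ⟨hv2, hv2A⟩, hf2⟩ := ht2
    have hder : ∀ s ∈ Set.Ioo t1 t2,
        HasDerivAt φ (σ * (u + s) ^ (σ - 1) - σ * (v + s) ^ (σ - 1)) s := by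
      intro s hs
      have hus : (0:ℝ) < u + s := by nlinarith [hs.1]
      have hvs : (0:ℝ) < v + s := by nlinarith [hs.1]
      have d1 : HasDerivAt (fun t => (u + t) ^ σ) (σ * (u + s) ^ (σ - 1)) s := by
        have := (Real.hasDerivAt_rpow_const (x := u + s) (p := σ)
            (Or.inl hus.ne')).comp s ((hasDerivAt_id s).const_add u)
        simpa [Function.comp_def] using this
      have d2 : HasDerivAt (fun t => (v + t) ^ σ) (σ * (v + s) ^ (σ - 1)) s := by
        have := (Real.hasDerivAt_rpow_const (x := v + s) (p := σ)
            (Or.inl hvs.ne')).comp s ((hasDerivAt_id s).const_add v)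
        simpa [Function.comp_def] using this
      simpa [hφdef] using ((d1.sub_const (u ^ σ)).sub d2).add_const (v ^ σ)
    have hcont : ContinuousOn φ (Set.Icc t1 t2) := by
      intro s hs
      have hus : (0:ℝ) < u + s := by nlinarith [hs.1]
      have hvs : (0:ℝ) < v + s := by nlinarith [hs.1]
      have d1 : HasDerivAt (fun t => (u + t) ^ σ) (σ * (u + s) ^ (σ - 1)) s := by
        have := (Real.hasDerivAt_rpow_const (x := u + s) (p := σ)
            (Or.inl hus.ne')).comp s ((hasDerivAt_id s).const_add u)
        simpa [Function.comp_def] using this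
      have d2 : HasDerivAt (fun t => (v + t) ^ σ) (σ * (v + s) ^ (σ - 1)) s := by
        have := (Real.hasDerivAt_rpow_const (x := v + s) (p := σ)
            (Or.inl hvs.ne')).comp s ((hasDerivAt_id s).const_add v)
        simpa [Function.comp_def] using this
      exact (((d1.sub_const (u ^ σ)).sub d2).add_const (v ^ σ)).continuousAt.continuousWithinAt
    obtain ⟨c, hc, hcslope⟩ := exists_hasDerivAt_eq_slope φ
      (fun s => σ * (u + s) ^ (σ - 1) - σ * (v + s) ^ (σ - 1)) hlt hcont hder
    have hphidiff : φ t2 - φ t1 = (σ * (u + c) ^ (σ - 1) - σ * (v + c) ^ (σ - 1)) * (t2 - t1) := by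
      rw [hcslope, div_mul_cancel₀ _ (sub_ne_zero.mpr hlt.ne')]
    have hfac : σ * (u + c) ^ (σ - 1) - σ * (v + c) ^ (σ - 1)
        = σ * ((u + c) ^ (σ - 1) - (v + c) ^ (σ - 1)) := by ring
    have huc : η < u + c := by linarith [hc.1]
    have hvc : η < v + c := by linarith [hc.1]
    have hucA : u + c ≤ A := by linarith [hc.2]
    have hvcA : v + c ≤ A := by linarith [hc.2]
    have h22 : σ - 1 - 1 = σ - 2 := by ring
    have hlower : |σ - 1| * (η ^ (σ - 2) ⊓ A ^ (σ - 2)) * |u - v|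
        ≤ |(u + c) ^ (σ - 1) - (v + c) ^ (σ - 1)| := by
      have hne : u ≠ v := by
        intro h; rw [h, sub_self, abs_zero] at huv; linarith
      rcases hne.lt_or_gt with hlt' | hlt'
      · have h0 := rpow_diff_lower (A := A) (σ - 1) (sub_ne_zero.mpr hσ1) hη
          (x := u + c) (y := v + c) huc.le (by linarith) hvcA
        rw [h22] at h0
        rw [abs_sub_comm ((u + c) ^ (σ - 1)) ((v + c) ^ (σ - 1))]
        have habs : |u - v| = v + c - (u + c) := by
          rw [abs_of_neg (sub_neg.mpr hlt')]; ring
        rw [habs]; exact h0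
      · have h0 := rpow_diff_lower (A := A) (σ - 1) (sub_ne_zero.mpr hσ1) hη
          (x := v + c) (y := u + c) hvc.le (by linarith) hucA
        rw [h22] at h0
        have habs : |u - v| = u + c - (v + c) := by
          rw [abs_of_pos (sub_pos.mpr hlt')]; ring
        rw [habs]; exact h0
    have ht : (0:ℝ) ≤ t2 - t1 := (sub_pos.mpr hlt).le
    have hη' : η ≤ |u - v| := huv.le
    have w1 := mul_le_mul_of_nonneg_left hη' (mul_nonneg hs1.le hmin.le)
    have w2 := mul_le_mul_of_nonneg_right
      (mul_le_mul_of_nonneg_left ((by nlinarith : (|σ - 1| * (η ^ (σ - 2) ⊓ A ^ (σ - 2))) * η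
          ≤ |(u + c) ^ (σ - 1) - (v + c) ^ (σ - 1)|)) hs0.le) ht
    have heq : |φ t2 - φ t1|
        = |σ| * |(u + c) ^ (σ - 1) - (v + c) ^ (σ - 1)| * (t2 - t1) := by
      rw [hphidiff, hfac, abs_mul, abs_mul, abs_of_pos (sub_pos.mpr hlt)]
    have hphismall : |φ t2 - φ t1| < 2 * ε := by
      calc |φ t2 - φ t1| ≤ |φ t2| + |φ t1| := abs_sub _ _
        _ < 2 * ε := by linarith
    rw [le_div_iff₀ hδ]
    have hre : (t2 - t1) * δ
        = |σ| * ((|σ - 1| * (η ^ (σ - 2) ⊓ A ^ (σ - 2))) * η) * (t2 - t1) := by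
      rw [hδdef]; ring
    rw [hre]
    linarith [w2, hphismall, heq.le, heq.ge]
  refine (Real.volume_le_diam _).trans ?_
  refine EMetric.diam_le fun x hx y hy => ?_
  rw [edist_dist, Real.dist_eq]
  refine ENNReal.ofReal_le_ofReal ?_
  rcases lt_trichotomy x y with h | h | h
  · rw [abs_of_neg (sub_neg.mpr h)]
    have := key x hx y hy h; linarith
  · rw [h, sub_self, abs_zero]; positivity
  · rw [abs_of_pos (sub_pos.mpr h)]
    exact key y hy x hx h

lemma stmt18_measurable_rpow (σ : ℝ) : Measurable fun x : ℝ => x ^ σ := by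
  have heq : (fun x : ℝ => x ^ σ) = fun x =>
      if x = 0 then (0:ℝ) ^ σ
      else if x < 0 then Real.exp (Real.log x * σ) * Real.cos (σ * Real.pi)
      else Real.exp (Real.log x * σ) := by
    funext x
    rcases lt_trichotomy x 0 with h | h | h
    · rw [if_neg h.ne, if_pos h, Real.rpow_def_of_neg h]
    · rw [h, if_pos rfl]
    · rw [if_neg h.ne', if_neg (not_lt.mpr h.le), Real.rpow_def_of_pos h]
  rw [heq]
  apply Measurable.ite
  · have : {x : ℝ | x = 0} = {(0:ℝ)} := Set.setOf_eq_eq_singleton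
    rw [show ({x : ℝ | x = 0}) = ({(0:ℝ)} : Set ℝ) from Set.setOf_eq_eq_singleton]
    exact MeasurableSet.singleton 0
  · exact measurable_const
  · apply Measurable.ite (measurableSet_lt measurable_id measurable_const)
    · exact ((Real.measurable_log.mul measurable_const).exp).mul measurable_const
    · exact (Real.measurable_log.mul measurable_const).exp

/-- sublevel bound for the second difference of `s ↦ s^σ`, `σ ∉ {0,1}`. -/
theorem stmt18 (σ : ℝ) (hσ0 : σ ≠ 0) (hσ1 : σ ≠ 1) (A : ℝ) (hA : 1 ≤ A) :
    ∃ κ : ℝ, 0 < κ ∧ ∃ C : ℝ, ∀ ε : ℝ, 0 < ε →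
      volume {p : ℝ × ℝ × ℝ |
          p.1 ∈ Set.Ioc (0 : ℝ) A ∧ p.2.1 ∈ Set.Ioc (0 : ℝ) A ∧
          p.1 + p.2.2 ∈ Set.Ioc (0 : ℝ) A ∧ p.2.1 + p.2.2 ∈ Set.Ioc (0 : ℝ) A ∧
          |p.2.2| ≤ A ∧
          |(p.1 + p.2.2) ^ σ - p.1 ^ σ - (p.2.1 + p.2.2) ^ σ + p.2.1 ^ σ| < ε}
        ≤ ENNReal.ofReal (C * ε ^ κ) := by
  have hA0 : (0:ℝ) < A := lt_of_lt_of_le one_pos hA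
  have hs0 : (0:ℝ) < |σ| := abs_pos.mpr hσ0
  have hs1 : (0:ℝ) < |σ - 1| := abs_pos.mpr (sub_ne_zero.mpr hσ1)
  set b := |σ - 2| with hbdef
  have hb : (0:ℝ) ≤ b := abs_nonneg _
  set κ := 1 / (2 + b) with hκdef
  have hκ : 0 < κ := by positivity
  set c₀ := |σ| * |σ - 1| * A ^ (-b) with hc0def
  have hc₀ : 0 < c₀ := mul_pos (mul_pos hs0 hs1) (Real.rpow_pos_of_pos hA0 _)
  have hd : (0:ℝ) ≤ 2 / c₀ := by positivity
  refine ⟨κ, hκ, (10 + 2 / c₀) * A ^ 2 + 2 * A ^ 3, fun ε hε => ?_⟩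
  have htriv : {p : ℝ × ℝ × ℝ |
          p.1 ∈ Set.Ioc (0 : ℝ) A ∧ p.2.1 ∈ Set.Ioc (0 : ℝ) A ∧
          p.1 + p.2.2 ∈ Set.Ioc (0 : ℝ) A ∧ p.2.1 + p.2.2 ∈ Set.Ioc (0 : ℝ) A ∧
          |p.2.2| ≤ A ∧
          |(p.1 + p.2.2) ^ σ - p.1 ^ σ - (p.2.1 + p.2.2) ^ σ + p.2.1 ^ σ| < ε}
        ⊆ Ioc (0:ℝ) A ×ˢ Ioc (0:ℝ) A ×ˢ Icc (-A) A :=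
    fun p hp => ⟨hp.1, hp.2.1, abs_le.mp hp.2.2.2.2.1⟩
  rcases le_or_gt ε 1 with hε1 | hε1
  · -- main case
    set η := ε ^ κ with hηdef
    have hη0 : 0 < η := Real.rpow_pos_of_pos hε _
    have hη1 : η ≤ 1 := Real.rpow_le_one hε.le hε1 hκ.le
    set δ := |σ| * |σ - 1| * η * (η ^ (σ - 2) ⊓ A ^ (σ - 2)) with hδdef
    have hmin : (0:ℝ) < η ^ (σ - 2) ⊓ A ^ (σ - 2) :=
      lt_min (Real.rpow_pos_of_pos hη0 _) (Real.rpow_pos_of_pos hA0 _)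
    have hδ : 0 < δ := by positivity
    have hmin_ge : η ^ b * A ^ (-b) ≤ η ^ (σ - 2) ⊓ A ^ (σ - 2) := by
      have hAneg : A ^ (-b) ≤ 1 := Real.rpow_le_one_of_one_le_of_nonpos hA (by linarith)
      have hAneg0 : (0:ℝ) < A ^ (-b) := Real.rpow_pos_of_pos hA0 _
      rcases le_or_gt 2 σ with h2 | h2
      · have hbe : b = σ - 2 := abs_of_nonneg (by linarith)
        have hAneg' : A ^ (-(σ - 2)) ≤ 1 := hbe ▸ hAneg
        have hAneg0' : (0:ℝ) < A ^ (-(σ - 2)) := hbe ▸ hAneg0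
        refine le_min ?_ ?_
        · rw [hbe]
          nlinarith [Real.rpow_pos_of_pos hη0 (σ - 2)]
        · rw [hbe]
          have g1 : η ^ (σ - 2) ≤ 1 := Real.rpow_le_one hη0.le hη1 (by linarith)
          have g3 : (1:ℝ) ≤ A ^ (σ - 2) := Real.one_le_rpow hA (by linarith)
          nlinarith [Real.rpow_pos_of_pos hη0 (σ - 2)]
      · have hbe : b = -(σ - 2) := abs_of_neg (by linarith)
        have hmb : -b = σ - 2 := by rw [hbe]; ring
        have g1 : η ^ b ≤ 1 := Real.rpow_le_one hη0.le hη1 hb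
        have g2 : A ^ (σ - 2) ≤ 1 := Real.rpow_le_one_of_one_le_of_nonpos hA (by linarith)
        have g3 : (1:ℝ) ≤ η ^ (σ - 2) :=
          Real.one_le_rpow_of_pos_of_le_one_of_nonpos hη0 hη1 (by linarith)
        rw [hmb]
        refine le_min ?_ ?_
        · nlinarith [Real.rpow_pos_of_pos hη0 b, Real.rpow_pos_of_pos hA0 (σ - 2)]
        · nlinarith [Real.rpow_pos_of_pos hA0 (σ - 2)]
    have hδc : c₀ * η ^ ((1:ℝ) + b) ≤ δ := by
      have he : η ^ ((1:ℝ) + b) = η * η ^ b := by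
        rw [Real.rpow_add hη0, Real.rpow_one]
      rw [he, hδdef, hc0def]
      have hw := mul_le_mul_of_nonneg_left hmin_ge
        (by positivity : (0:ℝ) ≤ |σ| * |σ - 1| * η)
      nlinarith [hw]
    have hcore_bound : 2 * ε / δ ≤ 2 / c₀ * η := by
      have h1 : 2 * ε / δ ≤ 2 * ε / (c₀ * η ^ ((1:ℝ) + b)) := by
        apply div_le_div_of_nonneg_left (by positivity) (by positivity) hδc
      have e1 : (ε ^ κ) ^ ((1:ℝ) + b) = ε ^ (κ * (1 + b)) :=
        (Real.rpow_mul hε.le κ (1 + b)).symm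
      have e3 : 1 - κ * (1 + b) = κ := by
        have h2b : (2:ℝ) + b ≠ 0 := by positivity
        rw [hκdef]; field_simp; norm_num
      have e4 := Real.rpow_sub hε 1 (κ * (1 + b))
      rw [Real.rpow_one] at e4
      have h3 : ε / η ^ ((1:ℝ) + b) = η := by
        rw [hηdef, e1, ← e4, e3]
      have h2 : 2 * ε / (c₀ * η ^ ((1:ℝ) + b)) = 2 / c₀ * (ε / η ^ ((1:ℝ) + b)) := by
        field_simp
      rw [h2, h3] at h1
      exact h1
    have hcover : {p : ℝ × ℝ × ℝ |
          p.1 ∈ Set.Ioc (0 : ℝ) A ∧ p.2.1 ∈ Set.Ioc (0 : ℝ) A ∧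
          p.1 + p.2.2 ∈ Set.Ioc (0 : ℝ) A ∧ p.2.1 + p.2.2 ∈ Set.Ioc (0 : ℝ) A ∧
          |p.2.2| ≤ A ∧
          |(p.1 + p.2.2) ^ σ - p.1 ^ σ - (p.2.1 + p.2.2) ^ σ + p.2.1 ^ σ| < ε}
        ⊆ (Ioc (0:ℝ) η ×ˢ Ioc (0:ℝ) A ×ˢ Icc (-A) A) ∪
          ((Ioc (0:ℝ) A ×ˢ Ioc (0:ℝ) η ×ˢ Icc (-A) A) ∪
          (({p : ℝ × ℝ × ℝ | p.1 ∈ Ioc (0:ℝ) A ∧ |p.1 - p.2.1| ≤ η ∧ p.2.2 ∈ Icc (-A) A}) ∪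
          ({p : ℝ × ℝ × ℝ | p.1 ∈ Ioc (0:ℝ) A ∧ p.2.1 ∈ Ioc (0:ℝ) A ∧ η < |p.1 - p.2.1| ∧
            (p.1 + p.2.2 ∈ Ioc (0:ℝ) η ∨ p.2.1 + p.2.2 ∈ Ioc (0:ℝ) η ∨
              ((η < p.1 + p.2.2 ∧ p.1 + p.2.2 ≤ A) ∧ (η < p.2.1 + p.2.2 ∧ p.2.1 + p.2.2 ≤ A) ∧
                |(p.1 + p.2.2) ^ σ - p.1 ^ σ - (p.2.1 + p.2.2) ^ σ + p.2.1 ^ σ| < ε))}))) := by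
      rintro ⟨pu, pv, pt⟩ ⟨h1, h2, h3, h4, h5, h6⟩
      by_cases c1 : pu ≤ η
      · exact Or.inl ⟨⟨h1.1, c1⟩, h2, abs_le.mp h5⟩
      refine Or.inr ?_
      by_cases c2 : pv ≤ η
      · exact Or.inl ⟨h1, ⟨h2.1, c2⟩, abs_le.mp h5⟩
      refine Or.inr ?_
      by_cases c3 : |pu - pv| ≤ η
      · exact Or.inl ⟨h1, c3, abs_le.mp h5⟩
      refine Or.inr ⟨h1, h2, lt_of_not_ge c3, ?_⟩
      by_cases c4 : pu + pt ≤ η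
      · exact Or.inl ⟨h3.1, c4⟩
      by_cases c5 : pv + pt ≤ η
      · exact Or.inr (Or.inl ⟨h4.1, c5⟩)
      exact Or.inr (Or.inr ⟨⟨lt_of_not_ge c4, h3.2⟩, ⟨lt_of_not_ge c5, h4.2⟩, h6⟩)
    have hB1v : volume (Ioc (0:ℝ) η ×ˢ Ioc (0:ℝ) A ×ˢ Icc (-A) A)
        ≤ ENNReal.ofReal (2 * A ^ 2 * η) := by
      rw [Measure.volume_eq_prod ℝ (ℝ × ℝ), Measure.prod_prod,
        Measure.volume_eq_prod ℝ ℝ, Measure.prod_prod, Real.volume_Ioc, Real.volume_Ioc,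
        Real.volume_Icc, sub_zero, sub_zero, show A - -A = 2 * A by ring,
        ← ENNReal.ofReal_mul hA0.le, ← ENNReal.ofReal_mul hη0.le]
      exact ENNReal.ofReal_le_ofReal (le_of_eq (by ring))
    have hB2v : volume (Ioc (0:ℝ) A ×ˢ Ioc (0:ℝ) η ×ˢ Icc (-A) A)
        ≤ ENNReal.ofReal (2 * A ^ 2 * η) := by
      rw [Measure.volume_eq_prod ℝ (ℝ × ℝ), Measure.prod_prod,
        Measure.volume_eq_prod ℝ ℝ, Measure.prod_prod, Real.volume_Ioc, Real.volume_Ioc,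
        Real.volume_Icc, sub_zero, sub_zero, show A - -A = 2 * A by ring,
        ← ENNReal.ofReal_mul hη0.le, ← ENNReal.ofReal_mul hA0.le]
      exact ENNReal.ofReal_le_ofReal (le_of_eq (by ring))
    have hB5meas : MeasurableSet
        {p : ℝ × ℝ × ℝ | p.1 ∈ Ioc (0:ℝ) A ∧ |p.1 - p.2.1| ≤ η ∧ p.2.2 ∈ Icc (-A) A} := by
      apply MeasurableSet.inter (measurableSet_Ioc.preimage measurable_fst)
      apply MeasurableSet.inter
      · exact measurableSet_le ((measurable_fst.sub measurable_snd.fst).abs) measurable_const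
      · exact measurableSet_Icc.preimage measurable_snd.snd
    have hB5v : volume
        {p : ℝ × ℝ × ℝ | p.1 ∈ Ioc (0:ℝ) A ∧ |p.1 - p.2.1| ≤ η ∧ p.2.2 ∈ Icc (-A) A}
        ≤ ENNReal.ofReal (4 * A ^ 2 * η) := by
      have hb5 := stmt18_slice (a := A)
        (M := ENNReal.ofReal (2 * η) * ENNReal.ofReal (2 * A)) hB5meas (fun x => ?_)
      · refine hb5.trans ?_
        rw [← ENNReal.ofReal_mul (by positivity), ← ENNReal.ofReal_mul hA0.le]
        exact ENNReal.ofReal_le_ofReal (le_of_eq (by ring))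
      by_cases hx : x ∈ Ioc (0:ℝ) A
      · rw [indicator_of_mem hx]
        refine (measure_mono (?_ : _ ⊆ Icc (x - η) (x + η) ×ˢ Icc (-A) A)).trans ?_
        · rintro ⟨qv, qt⟩ hq
          obtain ⟨-, habs, ht⟩ := hq
          have h' := abs_le.mp habs
          exact ⟨⟨by linarith [h'.2], by linarith [h'.1]⟩, ht⟩
        · rw [Measure.volume_eq_prod ℝ ℝ, Measure.prod_prod, Real.volume_Icc, Real.volume_Icc,
            show x + η - (x - η) = 2 * η by ring, show A - -A = 2 * A by ring]
      · rw [indicator_of_notMem hx]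
        have he : Prod.mk x ⁻¹'
            {p : ℝ × ℝ × ℝ | p.1 ∈ Ioc (0:ℝ) A ∧ |p.1 - p.2.1| ≤ η ∧ p.2.2 ∈ Icc (-A) A}
            = ∅ := eq_empty_iff_forall_notMem.mpr fun q hq => hx hq.1
        rw [he, measure_empty]
    have hGmeas : MeasurableSet
        {p : ℝ × ℝ × ℝ | p.1 ∈ Ioc (0:ℝ) A ∧ p.2.1 ∈ Ioc (0:ℝ) A ∧ η < |p.1 - p.2.1| ∧
          (p.1 + p.2.2 ∈ Ioc (0:ℝ) η ∨ p.2.1 + p.2.2 ∈ Ioc (0:ℝ) η ∨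
            ((η < p.1 + p.2.2 ∧ p.1 + p.2.2 ≤ A) ∧ (η < p.2.1 + p.2.2 ∧ p.2.1 + p.2.2 ≤ A) ∧
              |(p.1 + p.2.2) ^ σ - p.1 ^ σ - (p.2.1 + p.2.2) ^ σ + p.2.1 ^ σ| < ε))} := by
      have hm : Measurable fun p : ℝ × ℝ × ℝ =>
          |(p.1 + p.2.2) ^ σ - p.1 ^ σ - (p.2.1 + p.2.2) ^ σ + p.2.1 ^ σ| := by
        apply Measurable.abs
        have hr := stmt18_measurable_rpow σ
        exact (((hr.comp (measurable_fst.add measurable_snd.snd)).sub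
          (hr.comp measurable_fst)).sub
          (hr.comp (measurable_snd.fst.add measurable_snd.snd))).add
          (hr.comp measurable_snd.fst)
      apply MeasurableSet.inter (measurableSet_Ioc.preimage measurable_fst)
      apply MeasurableSet.inter (measurableSet_Ioc.preimage measurable_snd.fst)
      apply MeasurableSet.inter
      · exact measurableSet_lt measurable_const ((measurable_fst.sub measurable_snd.fst).abs)
      apply MeasurableSet.union
      · exact measurableSet_Ioc.preimage (measurable_fst.add measurable_snd.snd)
      apply MeasurableSet.union
      · exact measurableSet_Ioc.preimage (measurable_snd.fst.add measurable_snd.snd)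
      apply MeasurableSet.inter
      · exact (measurableSet_lt measurable_const (measurable_fst.add measurable_snd.snd)).inter
          (measurableSet_le (measurable_fst.add measurable_snd.snd) measurable_const)
      apply MeasurableSet.inter
      · exact (measurableSet_lt measurable_const (measurable_snd.fst.add measurable_snd.snd)).inter
          (measurableSet_le (measurable_snd.fst.add measurable_snd.snd) measurable_const)
      · exact measurableSet_lt hm measurable_const
    have hGv : volume
        {p : ℝ × ℝ × ℝ | p.1 ∈ Ioc (0:ℝ) A ∧ p.2.1 ∈ Ioc (0:ℝ) A ∧ η < |p.1 - p.2.1| ∧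
          (p.1 + p.2.2 ∈ Ioc (0:ℝ) η ∨ p.2.1 + p.2.2 ∈ Ioc (0:ℝ) η ∨
            ((η < p.1 + p.2.2 ∧ p.1 + p.2.2 ≤ A) ∧ (η < p.2.1 + p.2.2 ∧ p.2.1 + p.2.2 ≤ A) ∧
              |(p.1 + p.2.2) ^ σ - p.1 ^ σ - (p.2.1 + p.2.2) ^ σ + p.2.1 ^ σ| < ε))}
        ≤ ENNReal.ofReal A * (ENNReal.ofReal A *
          (ENNReal.ofReal η + (ENNReal.ofReal η + ENNReal.ofReal (2 * ε / δ)))) := by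
      apply stmt18_slice hGmeas
      intro x
      by_cases hx : x ∈ Ioc (0:ℝ) A
      · rw [indicator_of_mem hx]
        apply stmt18_slice (hGmeas.preimage measurable_prodMk_left)
        intro y
        by_cases hy : y ∈ Ioc (0:ℝ) A
        · rw [indicator_of_mem hy]
          by_cases hxy : η < |x - y|
          · refine (measure_mono (?_ : _ ⊆ {t : ℝ | x + t ∈ Ioc (0:ℝ) η} ∪
              ({t : ℝ | y + t ∈ Ioc (0:ℝ) η} ∪
                {t : ℝ | (η < x + t ∧ x + t ≤ A) ∧ (η < y + t ∧ y + t ≤ A) ∧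
                  |(x + t) ^ σ - x ^ σ - (y + t) ^ σ + y ^ σ| < ε}))).trans ?_
            · intro t ht
              obtain ⟨-, -, -, hP⟩ := ht
              rcases hP with h | h | h
              · exact Or.inl h
              · exact Or.inr (Or.inl h)
              · exact Or.inr (Or.inr h)
            · refine (measure_union_le _ _).trans ?_
              refine add_le_add ?_ ((measure_union_le _ _).trans (add_le_add ?_ ?_))
              · have he : {t : ℝ | x + t ∈ Ioc (0:ℝ) η} = Ioc (-x) (η - x) := by
                  ext t
                  simp only [mem_setOf_eq, mem_Ioc]
                  constructor <;> intro h' <;> exact ⟨by linarith [h'.1], by linarith [h'.2]⟩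
                rw [he, Real.volume_Ioc, show η - x - -x = η by ring]
              · have he : {t : ℝ | y + t ∈ Ioc (0:ℝ) η} = Ioc (-y) (η - y) := by
                  ext t
                  simp only [mem_setOf_eq, mem_Ioc]
                  constructor <;> intro h' <;> exact ⟨by linarith [h'.1], by linarith [h'.2]⟩
                rw [he, Real.volume_Ioc, show η - y - -y = η by ring]
              · exact stmt18_core σ hσ0 hσ1 hA hη0 hε hxy
          · have he : (Prod.mk y ⁻¹' (Prod.mk x ⁻¹'
                {p : ℝ × ℝ × ℝ | p.1 ∈ Ioc (0:ℝ) A ∧ p.2.1 ∈ Ioc (0:ℝ) A ∧ η < |p.1 - p.2.1| ∧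
          (p.1 + p.2.2 ∈ Ioc (0:ℝ) η ∨ p.2.1 + p.2.2 ∈ Ioc (0:ℝ) η ∨
            ((η < p.1 + p.2.2 ∧ p.1 + p.2.2 ≤ A) ∧ (η < p.2.1 + p.2.2 ∧ p.2.1 + p.2.2 ≤ A) ∧
              |(p.1 + p.2.2) ^ σ - p.1 ^ σ - (p.2.1 + p.2.2) ^ σ + p.2.1 ^ σ| < ε))})) = (∅ : Set ℝ) :=
              eq_empty_iff_forall_notMem.mpr fun t ht => hxy ht.2.2.1
            rw [he, measure_empty]
            exact zero_le
        · rw [indicator_of_notMem hy]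
          have he : (Prod.mk y ⁻¹' (Prod.mk x ⁻¹'
              {p : ℝ × ℝ × ℝ | p.1 ∈ Ioc (0:ℝ) A ∧ p.2.1 ∈ Ioc (0:ℝ) A ∧ η < |p.1 - p.2.1| ∧
          (p.1 + p.2.2 ∈ Ioc (0:ℝ) η ∨ p.2.1 + p.2.2 ∈ Ioc (0:ℝ) η ∨
            ((η < p.1 + p.2.2 ∧ p.1 + p.2.2 ≤ A) ∧ (η < p.2.1 + p.2.2 ∧ p.2.1 + p.2.2 ≤ A) ∧
              |(p.1 + p.2.2) ^ σ - p.1 ^ σ - (p.2.1 + p.2.2) ^ σ + p.2.1 ^ σ| < ε))})) = (∅ : Set ℝ) :=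
            eq_empty_iff_forall_notMem.mpr fun t ht => hy ht.2.1
          rw [he, measure_empty]
      · rw [indicator_of_notMem hx]
        have he : (Prod.mk x ⁻¹'
            {p : ℝ × ℝ × ℝ | p.1 ∈ Ioc (0:ℝ) A ∧ p.2.1 ∈ Ioc (0:ℝ) A ∧ η < |p.1 - p.2.1| ∧
          (p.1 + p.2.2 ∈ Ioc (0:ℝ) η ∨ p.2.1 + p.2.2 ∈ Ioc (0:ℝ) η ∨
            ((η < p.1 + p.2.2 ∧ p.1 + p.2.2 ≤ A) ∧ (η < p.2.1 + p.2.2 ∧ p.2.1 + p.2.2 ≤ A) ∧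
              |(p.1 + p.2.2) ^ σ - p.1 ^ σ - (p.2.1 + p.2.2) ^ σ + p.2.1 ^ σ| < ε))}) = (∅ : Set (ℝ × ℝ)) :=
          eq_empty_iff_forall_notMem.mpr fun q hq => hx hq.1
        rw [he, measure_empty]
    have hGv' : volume
        {p : ℝ × ℝ × ℝ | p.1 ∈ Ioc (0:ℝ) A ∧ p.2.1 ∈ Ioc (0:ℝ) A ∧ η < |p.1 - p.2.1| ∧
          (p.1 + p.2.2 ∈ Ioc (0:ℝ) η ∨ p.2.1 + p.2.2 ∈ Ioc (0:ℝ) η ∨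
            ((η < p.1 + p.2.2 ∧ p.1 + p.2.2 ≤ A) ∧ (η < p.2.1 + p.2.2 ∧ p.2.1 + p.2.2 ≤ A) ∧
              |(p.1 + p.2.2) ^ σ - p.1 ^ σ - (p.2.1 + p.2.2) ^ σ + p.2.1 ^ σ| < ε))}
        ≤ ENNReal.ofReal (A * (A * (η + (η + 2 / c₀ * η)))) := by
      refine hGv.trans ?_
      rw [ENNReal.ofReal_mul hA0.le, ENNReal.ofReal_mul hA0.le,
        ENNReal.ofReal_add hη0.le (by positivity), ENNReal.ofReal_add hη0.le (by positivity)]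
      gcongr
    calc volume _ ≤ volume _ := measure_mono hcover
      _ ≤ volume (Ioc (0:ℝ) η ×ˢ Ioc (0:ℝ) A ×ˢ Icc (-A) A) + volume _ := measure_union_le _ _
      _ ≤ volume (Ioc (0:ℝ) η ×ˢ Ioc (0:ℝ) A ×ˢ Icc (-A) A) +
          (volume (Ioc (0:ℝ) A ×ˢ Ioc (0:ℝ) η ×ˢ Icc (-A) A) + volume _) :=
          add_le_add le_rfl (measure_union_le _ _)
      _ ≤ volume (Ioc (0:ℝ) η ×ˢ Ioc (0:ℝ) A ×ˢ Icc (-A) A) +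
          (volume (Ioc (0:ℝ) A ×ˢ Ioc (0:ℝ) η ×ˢ Icc (-A) A) +
            (volume {p : ℝ × ℝ × ℝ | p.1 ∈ Ioc (0:ℝ) A ∧ |p.1 - p.2.1| ≤ η ∧
                p.2.2 ∈ Icc (-A) A} +
             volume {p : ℝ × ℝ × ℝ | p.1 ∈ Ioc (0:ℝ) A ∧ p.2.1 ∈ Ioc (0:ℝ) A ∧
                η < |p.1 - p.2.1| ∧
                (p.1 + p.2.2 ∈ Ioc (0:ℝ) η ∨ p.2.1 + p.2.2 ∈ Ioc (0:ℝ) η ∨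
                  ((η < p.1 + p.2.2 ∧ p.1 + p.2.2 ≤ A) ∧
                   (η < p.2.1 + p.2.2 ∧ p.2.1 + p.2.2 ≤ A) ∧
                    |(p.1 + p.2.2) ^ σ - p.1 ^ σ - (p.2.1 + p.2.2) ^ σ + p.2.1 ^ σ| < ε))})) :=
          add_le_add le_rfl (add_le_add le_rfl (measure_union_le _ _))
      _ ≤ ENNReal.ofReal (2 * A ^ 2 * η) + (ENNReal.ofReal (2 * A ^ 2 * η) +
            (ENNReal.ofReal (4 * A ^ 2 * η) +
             ENNReal.ofReal (A * (A * (η + (η + 2 / c₀ * η)))))) :=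
          add_le_add hB1v (add_le_add hB2v (add_le_add hB5v hGv'))
      _ = ENNReal.ofReal (2 * A ^ 2 * η + (2 * A ^ 2 * η +
            (4 * A ^ 2 * η + A * (A * (η + (η + 2 / c₀ * η)))))) := by
          rw [← ENNReal.ofReal_add (by positivity) (by positivity),
            ← ENNReal.ofReal_add (by positivity) (by positivity),
            ← ENNReal.ofReal_add (by positivity) (by positivity)]
      _ ≤ ENNReal.ofReal (((10 + 2 / c₀) * A ^ 2 + 2 * A ^ 3) * ε ^ κ) := by
          apply ENNReal.ofReal_le_ofReal
          rw [← hηdef]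
          nlinarith [mul_nonneg (by positivity : (0:ℝ) ≤ 2 * A ^ 3) hη0.le]
  · -- trivial case ε > 1
    refine (measure_mono htriv).trans ?_
    rw [Measure.volume_eq_prod ℝ (ℝ × ℝ), Measure.prod_prod,
      Measure.volume_eq_prod ℝ ℝ, Measure.prod_prod, Real.volume_Ioc,
      Real.volume_Icc, sub_zero, show A - -A = 2 * A by ring,
      ← ENNReal.ofReal_mul hA0.le, ← ENNReal.ofReal_mul hA0.le]
    apply ENNReal.ofReal_le_ofReal
    have hεκ : (1:ℝ) ≤ ε ^ κ := Real.one_le_rpow hε1.le hκ.le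
    nlinarith [mul_nonneg (mul_nonneg hd (sq_nonneg A)) (by positivity : (0:ℝ) ≤ ε ^ κ),
      pow_pos hA0 3, mul_le_mul_of_nonneg_left hεκ (by positivity : (0:ℝ) ≤ 2 * A ^ 3)]
end
end
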